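/- arXiv:1211.6491 — 10 statements merged into one kernel-verified Lean document; each statement's English description precedes it below -/
import Mathlib

section
/- For the unrestricted FDMA sum-rate problem, the proportional-share allocation w_k = w_tot · p_k / (∑_{k'} p_{k'}) is the unique maximizer of ∑_k w_k·log(1 + p_k/(N₀·w_k)) over all nonnegative (w_k) with ∑_k w_k ≤ w_tot, and the resulting maximum value equals w_tot·log(1 + (∑_k p_k)/(N₀·w_tot)). -/
/-!
With `a = 1 + (∑ c) / W` the common signal-to-noise ratio of the proportional allocation, the
inequality `log x ≤ log a + x / a - 1` (strict unless `x = a`) bounds each term `w log (1 + c / w)`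
by `w log a + (w + c) / a - w`, strictly unless `w (a - 1) = c`. Summed over the users, this
bound is affine in `∑ w` with slope `log a - 1 + 1 / a ≥ 0`, hence at most its value `W log a`
at `∑ w = W`, which the proportional allocation attains.
-/

open Real Finset

section TangentBound

variable {a c w : ℝ}

theorem mul_log_one_add_div_lt_tangent (hc : 0 ≤ c) (ha : 0 < a) (hw : 0 ≤ w)
    (h : w * (a - 1) ≠ c) :
    w * log (1 + c / w) < w * log a + (w + c) / a - w := by
  rcases hw.eq_or_lt with rfl | hw
  · have hc : 0 < c := hc.lt_of_ne (by simpa using h)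
    simp only [zero_mul, zero_add, sub_zero]
    positivity
  · have hx : 0 < 1 + c / w := by positivity
    have hxa : (1 + c / w) / a ≠ 1 := by
      rw [Ne, div_eq_one_iff_eq ha.ne']
      intro hx_eq
      exact h (by rw [← hx_eq]; field_simp; ring)
    have hlog := log_lt_sub_one_of_pos (div_pos hx ha) hxa
    rw [log_div hx.ne' ha.ne'] at hlog
    calc w * log (1 + c / w) < w * (log a + ((1 + c / w) / a - 1)) := by gcongr; linarith
      _ = w * log a + (w + c) / a - w := by field_simp; ring

theorem mul_log_one_add_div_le_tangent (hc : 0 ≤ c) (ha : 0 < a) (hw : 0 ≤ w) :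
    w * log (1 + c / w) ≤ w * log a + (w + c) / a - w := by
  by_cases h : w * (a - 1) = c
  · rcases hw.eq_or_lt with rfl | hw
    · simp [← h]
    · have : 1 + c / w = a := by rw [← h]; field_simp; ring
      have hwc : (w + c) / a = w := by rw [← h]; field_simp; ring
      rw [this, hwc]
      linarith
  · exact (mul_log_one_add_div_lt_tangent hc ha hw h).le

end TangentBound

section ProportionalAllocation

variable {ι : Type*} [Fintype ι] {c w : ι → ℝ} {W : ℝ}

theorem sum_tangent_le (hc : ∀ k, 0 ≤ c k) (hW : 0 < W) (hw : ∑ k, w k ≤ W) :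
    ∑ k, (w k * log (1 + (∑ k, c k) / W) + (w k + c k) / (1 + (∑ k, c k) / W) - w k) ≤
      W * log (1 + (∑ k, c k) / W) := by
  set C := ∑ k, c k
  set a := 1 + C / W with ha_def
  have hC : 0 ≤ C := sum_nonneg fun k _ => hc k
  have ha : 0 < a := by positivity
  have hslope : 0 ≤ log a - 1 + a⁻¹ := by linarith [one_sub_inv_le_log_of_pos ha]
  have hsum : ∑ k, (w k * log a + (w k + c k) / a - w k) =
      (∑ k, w k) * (log a - 1 + a⁻¹) + C / a := by
    simp only [sum_sub_distrib, sum_add_distrib, ← sum_mul, ← sum_div]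
    ring
  have hval : W * log a = W * (log a - 1 + a⁻¹) + C / a := by
    rw [ha_def]; field_simp; ring
  rw [hsum, hval]
  gcongr

theorem sum_mul_log_one_add_div_lt (hc : ∀ k, 0 ≤ c k) (hC : 0 < ∑ k, c k) (hW : 0 < W)
    (hw₀ : ∀ k, 0 ≤ w k) (hw : ∑ k, w k ≤ W) (hne : w ≠ fun k => W * c k / ∑ k, c k) :
    ∑ k, w k * log (1 + c k / w k) < W * log (1 + (∑ k, c k) / W) := by
  obtain ⟨k₀, hk₀⟩ := Function.ne_iff.mp hne
  have ha : 0 < 1 + (∑ k, c k) / W := by positivity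
  have hk₀' : w k₀ * (1 + (∑ k, c k) / W - 1) ≠ c k₀ := by
    contrapose! hk₀
    rw [eq_div_iff hC.ne', ← hk₀]
    field_simp
    ring
  calc ∑ k, w k * log (1 + c k / w k)
      < ∑ k, (w k * log (1 + (∑ k, c k) / W) + (w k + c k) / (1 + (∑ k, c k) / W) - w k) :=
        sum_lt_sum (fun k _ => mul_log_one_add_div_le_tangent (hc k) ha (hw₀ k))
          ⟨k₀, mem_univ _, mul_log_one_add_div_lt_tangent (hc k₀) ha (hw₀ k₀) hk₀'⟩
    _ ≤ W * log (1 + (∑ k, c k) / W) := sum_tangent_le hc hW hw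

theorem sum_proportional_mul_log_one_add_div (c : ι → ℝ) (hC : ∑ k, c k ≠ 0) (hW : W ≠ 0) :
    ∑ k, W * c k / (∑ k, c k) * log (1 + c k / (W * c k / ∑ k, c k)) =
      W * log (1 + (∑ k, c k) / W) := by
  have hterm : ∀ k, W * c k / (∑ k, c k) * log (1 + c k / (W * c k / ∑ k, c k)) =
      W * c k / (∑ k, c k) * log (1 + (∑ k, c k) / W) := by
    intro k
    rcases eq_or_ne (c k) 0 with hck | hck
    · simp [hck]
    · congr 3
      field_simp
  simp only [hterm, ← sum_mul, ← sum_div, ← mul_sum]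
  field_simp

end ProportionalAllocation

/-- For the unrestricted FDMA sum-rate problem, the proportional-share allocation
`w_k = w_tot · p_k / ∑ p` is the unique maximizer, and the maximum value equals
`w_tot·log₂(1 + (∑ p)/(N₀·w_tot))`. -/
theorem stmt_1 (K : ℕ) (hK : 0 < K) (p : Fin K → ℝ) (hp : ∀ k, 0 < p k)
    (wtot N₀ : ℝ) (hw : 0 < wtot) (hN : 0 < N₀) :
    let F : (Fin K → ℝ) → ℝ := fun w => ∑ k, w k * Real.logb 2 (1 + p k / (N₀ * w k))
    let wstar : Fin K → ℝ := fun k => wtot * p k / (∑ k', p k')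
    (∀ w : Fin K → ℝ, (∀ k, 0 ≤ w k) → (∑ k, w k) ≤ wtot → F w ≤ F wstar) ∧
    (∀ w : Fin K → ℝ, (∀ k, 0 ≤ w k) → (∑ k, w k) ≤ wtot → F w = F wstar → w = wstar) ∧
    F wstar = wtot * Real.logb 2 (1 + (∑ k, p k) / (N₀ * wtot)) := by
  intro F wstar
  have : Nonempty (Fin K) := ⟨⟨0, hK⟩⟩
  set c : Fin K → ℝ := fun k => p k / N₀
  have hc : ∀ k, 0 ≤ c k := fun k => (div_pos (hp k) hN).le
  have hC : 0 < ∑ k, c k := sum_pos (fun k _ => div_pos (hp k) hN) univ_nonempty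
  have hF : ∀ w, F w = (∑ k, w k * log (1 + c k / w k)) / log 2 := fun w => by
    simp only [F, c, logb, div_div, sum_div, mul_div_assoc]
  have hstar : wstar = fun k => wtot * c k / ∑ k, c k := by
    funext k
    simp only [wstar, c, ← sum_div]
    field_simp
  have hval : F wstar = wtot * logb 2 (1 + (∑ k, p k) / (N₀ * wtot)) := by
    rw [hF, hstar, sum_proportional_mul_log_one_add_div c hC.ne' hw.ne', logb, ← sum_div,
      div_div, mul_div_assoc]
  have hlt : ∀ w, (∀ k, 0 ≤ w k) → ∑ k, w k ≤ wtot → w ≠ wstar → F w < F wstar := by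
    intro w hw₀ hle hne
    rw [hF, hF, hstar, sum_proportional_mul_log_one_add_div c hC.ne' hw.ne']
    rw [hstar] at hne
    exact div_lt_div_of_pos_right (sum_mul_log_one_add_div_lt hc hC hw hw₀ hle hne)
      (log_pos one_lt_two)
  refine ⟨fun w hw₀ hle => ?_, fun w hw₀ hle heq => ?_, hval⟩
  · rcases eq_or_ne w wstar with rfl | hne
    · exact le_rfl
    · exact (hlt w hw₀ hle hne).le
  · by_contra hne
    exact (hlt w hw₀ hle hne).ne heq
end

section
/- Suppose users are ordered so that p₁/w̄₁ ≥ p₂/w̄₂ ≥ ⋯ ≥ p_K/w̄_K with all p_k > 0 and w̄_k > 0. Define ŵ_k = (w_tot − ∑_{k'<k} w̄_{k'}) · p_k / (∑_{k'≥k} p_{k'}). If ŵ_k > w̄_k for some k, then ŵ_l > w̄_l for all l ≤ k; and if ŵ_k ≤ w̄_k, then ŵ_l ≤ w̄_l for all l ≥ k. Consequently there is a unique integer K₁ ∈ {0,1,…,K} with ŵ_k > w̄_k exactly for 1 ≤ k ≤ K₁. -/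
/-!
Write `R_k = w_tot - ∑_{k' < k} w̄_{k'}` and `S_k = ∑_{k' ≥ k} p_{k'}`, so that
`ŵ_k = R_k p_k / S_k`, `R_{k+1} = R_k - w̄_k` and `S_{k+1} = S_k - p_k`. If `ŵ_k ≤ w̄_k`, then
`R_k - w̄_k ≤ w̄_k S_{k+1} / p_k`, hence `ŵ_{k+1} ≤ w̄_k p_{k+1} / p_k ≤ w̄_{k+1}` by the ordering of
the minimal PSDs. So `ŵ_k ≤ w̄_k` is monotone in `k`, and the oversized users form an initial
segment `{k < K₁}`.
-/

/-- The due share of user `k`: remaining bandwidth after the first users take their upper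
limits, shared proportionally among users `k, …, K`. -/
noncomputable def dueShare (K : ℕ) (p wb : Fin K → ℝ) (wtot : ℝ) (k : Fin K) : ℝ :=
  (wtot - ∑ k' ∈ Finset.univ.filter (fun k' : Fin K => k' < k), wb k') * p k /
    (∑ k' ∈ Finset.univ.filter (fun k' : Fin K => k ≤ k'), p k')

open Finset

theorem Fin.existsUnique_iff_lt_of_antitone {K : ℕ} {P : Fin K → Prop} (hP : Antitone P) :
    ∃! n : ℕ, n ≤ K ∧ ∀ k : Fin K, P k ↔ (k : ℕ) < n := by
  classical
  have hK : ∃ n, ∀ h : n < K, ¬ P ⟨n, h⟩ := ⟨K, fun h => absurd h (lt_irrefl K)⟩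
  have le_of_iff : ∀ m n : ℕ, m ≤ K → (∀ k : Fin K, P k ↔ (k : ℕ) < m) →
      (∀ k : Fin K, P k ↔ (k : ℕ) < n) → m ≤ n := by
    intro m n hmK hm hn
    by_contra! hnm
    exact lt_irrefl n ((hn ⟨n, hnm.trans_le hmK⟩).mp ((hm _).mpr hnm))
  have hfind : ∀ k : Fin K, P k ↔ (k : ℕ) < Nat.find hK := by
    refine fun k => ⟨fun hk => ?_, fun hk => by_contra fun hn => Nat.find_min hK hk fun _ => hn⟩
    by_contra! hle
    exact Nat.find_spec hK (hle.trans_lt k.2) (hP (show ⟨_, _⟩ ≤ k from hle) hk)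
  have hfindK : Nat.find hK ≤ K := Nat.find_min' hK fun h => absurd h (lt_irrefl K)
  refine ⟨Nat.find hK, ⟨hfindK, hfind⟩, fun m ⟨hmK, hm⟩ => ?_⟩
  exact le_antisymm (le_of_iff m _ hmK hm hfind) (le_of_iff _ m hfindK hfind hm)

theorem Fin.sum_filter_lt_succ {M : Type*} [AddCommMonoid M] {n : ℕ} (f : Fin (n + 1) → M)
    (i : Fin n) :
    ∑ j ∈ univ.filter (· < i.succ), f j =
      f i.castSucc + ∑ j ∈ univ.filter (· < i.castSucc), f j := by
  rw [← sum_insert (by simp)]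
  congr 1
  ext j
  simp only [mem_filter, mem_insert, mem_univ, true_and, Fin.lt_def, Fin.ext_iff,
    Fin.val_succ, Fin.val_castSucc]
  omega

theorem Fin.sum_filter_castSucc_le {M : Type*} [AddCommMonoid M] {n : ℕ}
    (f : Fin (n + 1) → M) (i : Fin n) :
    ∑ j ∈ univ.filter (i.castSucc ≤ ·), f j =
      f i.castSucc + ∑ j ∈ univ.filter (i.succ ≤ ·), f j := by
  rw [← sum_insert (by simp [Fin.le_def])]
  congr 1
  ext j
  simp only [mem_filter, mem_insert, mem_univ, true_and, Fin.le_def, Fin.ext_iff,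
    Fin.val_succ, Fin.val_castSucc]
  omega

theorem sub_mul_div_le_of_mul_div_add_le {R S p₀ p₁ w₀ w₁ : ℝ} (hS : 0 < S) (hp₀ : 0 < p₀)
    (hp₁ : 0 ≤ p₁) (hw₀ : 0 < w₀) (hw₁ : 0 < w₁) (hord : p₁ / w₁ ≤ p₀ / w₀)
    (h : R * p₀ / (p₀ + S) ≤ w₀) :
    (R - w₀) * p₁ / S ≤ w₁ := by
  rw [div_le_iff₀ (by positivity)] at h
  rw [div_le_div_iff₀ hw₁ hw₀] at hord
  rw [div_le_iff₀ hS]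
  nlinarith [mul_le_mul_of_nonneg_right hord hS.le]

theorem dueShare_succ_le_of_le {n : ℕ} {p wb : Fin (n + 1) → ℝ} (hp : ∀ k, 0 < p k)
    (hwb : ∀ k, 0 < wb k) (wtot : ℝ) {i : Fin n}
    (hord : p i.succ / wb i.succ ≤ p i.castSucc / wb i.castSucc)
    (h : dueShare (n + 1) p wb wtot i.castSucc ≤ wb i.castSucc) :
    dueShare (n + 1) p wb wtot i.succ ≤ wb i.succ := by
  unfold dueShare at h ⊢
  rw [Fin.sum_filter_castSucc_le] at h
  rw [Fin.sum_filter_lt_succ, sub_add_eq_sub_sub_swap]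
  have hS : 0 < ∑ j ∈ univ.filter (i.succ ≤ ·), p j :=
    sum_pos (fun j _ => hp j) ⟨i.succ, by simp⟩
  exact sub_mul_div_le_of_mul_div_add_le hS (hp _) (hp _).le (hwb _) (hwb _) hord h

theorem monotone_dueShare_le {K : ℕ} {p wb : Fin K → ℝ} (hp : ∀ k, 0 < p k)
    (hwb : ∀ k, 0 < wb k) (wtot : ℝ) (hord : Antitone fun k => p k / wb k) :
    Monotone fun k => dueShare K p wb wtot k ≤ wb k := by
  cases K with
  | zero => exact fun k => k.elim0
  | succ n => exact Fin.monotone_iff_le_succ.mpr fun i =>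
      dueShare_succ_le_of_le hp hwb wtot (hord i.castSucc_le_succ)

theorem stmt_2_general (K : ℕ) (p wb : Fin K → ℝ) (hp : ∀ k, 0 < p k) (hwb : ∀ k, 0 < wb k)
    (wtot : ℝ)
    (hord : ∀ i j : Fin K, i ≤ j → p j / wb j ≤ p i / wb i) :
    (∀ k : Fin K, dueShare K p wb wtot k > wb k →
      ∀ l : Fin K, l ≤ k → dueShare K p wb wtot l > wb l) ∧
    (∀ k : Fin K, dueShare K p wb wtot k ≤ wb k →
      ∀ l : Fin K, k ≤ l → dueShare K p wb wtot l ≤ wb l) ∧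
    (∃! K₁ : ℕ, K₁ ≤ K ∧ ∀ k : Fin K, (dueShare K p wb wtot k > wb k ↔ (k : ℕ) < K₁)) := by
  have hle : Monotone fun k => dueShare K p wb wtot k ≤ wb k :=
    monotone_dueShare_le hp hwb wtot hord
  have hgt : Antitone fun k => wb k < dueShare K p wb wtot k :=
    fun _ _ hkl hl => lt_of_not_ge fun hk => (hle hkl hk).not_gt hl
  exact ⟨fun _ hk _ hlk => hgt hlk hk, fun _ hk _ hkl => hle hkl hk,
    Fin.existsUnique_iff_lt_of_antitone hgt⟩

/-- If users are ordered by non-increasing minimal PSD `p_k/w̄_k`, then oversizedness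
(`ŵ_k > w̄_k`) propagates downward in index, non-oversizedness propagates upward, and there
is a unique `K₁ ∈ {0,…,K}` such that exactly the first `K₁` users are oversized. -/
theorem stmt_2 (K : ℕ) (p wb : Fin K → ℝ) (hp : ∀ k, 0 < p k) (hwb : ∀ k, 0 < wb k)
    (wtot : ℝ) (hwtot : 0 < wtot)
    (hord : ∀ i j : Fin K, i ≤ j → p j / wb j ≤ p i / wb i) :
    (∀ k : Fin K, dueShare K p wb wtot k > wb k →
      ∀ l : Fin K, l ≤ k → dueShare K p wb wtot l > wb l) ∧
    (∀ k : Fin K, dueShare K p wb wtot k ≤ wb k →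
      ∀ l : Fin K, k ≤ l → dueShare K p wb wtot l ≤ wb l) ∧
    (∃! K₁ : ℕ, K₁ ≤ K ∧ ∀ k : Fin K, (dueShare K p wb wtot k > wb k ↔ (k : ℕ) < K₁)) :=
  stmt_2_general K p wb hp hwb wtot hord
end

section
/- Under the ordering p₁/w̄₁ ≥ ⋯ ≥ p_K/w̄_K, the allocation w*_k = w̄_k for k ≤ K₁ and w*_k = (w_tot − ∑_{k'≤K₁} w̄_{k'}) · p_k / (∑_{k'>K₁} p_{k'}) for k > K₁ maximizes ∑_k w_k·log(1 + p_k/(N₀·w_k)) subject to 0 ≤ w_k ≤ w̄_k for all k and ∑_k w_k ≤ w_tot, where K₁ is the number of oversized users (indices with ŵ_k > w̄_k). -/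
/-- The optimal restricted-FDMA allocation: oversized users receive their upper limits,
and the remaining bandwidth is shared proportionally among non-oversized users. -/
noncomputable def wopt (K : ℕ) (p wb : Fin K → ℝ) (wtot : ℝ) (K₁ : ℕ) (k : Fin K) : ℝ :=
  if (k : ℕ) < K₁ then wb k
  else (wtot - ∑ k' ∈ Finset.univ.filter (fun k' : Fin K => (k' : ℕ) < K₁), wb k') * p k /
    (∑ k' ∈ Finset.univ.filter (fun k' : Fin K => K₁ ≤ (k' : ℕ)), p k')

/-!
The sum rate is a sum of the concave functions `w ↦ w log (1 + c / w)`, so the KKT conditions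
are sufficient: it is enough to find a multiplier `m ≥ 0` for the total-bandwidth constraint such
that every user either has marginal rate `m`, or sits at its upper limit with marginal rate at
least `m`. The users `k ≥ K₁` receive `λ p_k` for the water level
`λ = (w_tot − ∑_{k<K₁} w̄_k) / ∑_{k≥K₁} p_k`, so they share the marginal rate at `1 / (N₀ λ)`.
Removing an oversized user raises the level (bandwidth left) / (power left), hence `w̄_k < λ p_k`
for `k < K₁`: these users have a larger marginal rate. Since user `K₁` is not oversized and
`p_k / w̄_k` is non-increasing, `λ p_k ≤ w̄_k` for `k ≥ K₁`, so the allocation is feasible.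
-/

open Finset Real

/-- The derivative of `w ↦ w * log (1 + c / w)` at `w > 0` is `marginalRate (c / w)`. -/
noncomputable def marginalRate (t : ℝ) : ℝ := log (1 + t) - t / (1 + t)

lemma marginalRate_zero : marginalRate 0 = 0 := by simp [marginalRate]

lemma monotoneOn_marginalRate : MonotoneOn marginalRate (Set.Ici 0) := by
  intro t (ht : 0 ≤ t) u (hu : 0 ≤ u) htu
  have h1t : 0 < 1 + t := by linarith
  have h1u : 0 < 1 + u := by linarith
  have hlog : 1 - (1 + t) / (1 + u) ≤ log (1 + u) - log (1 + t) := by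
    simpa [inv_div, log_div h1u.ne' h1t.ne'] using one_sub_inv_le_log_of_pos (div_pos h1u h1t)
  have hfrac : u / (1 + u) - t / (1 + t) ≤ 1 - (1 + t) / (1 + u) := by
    rw [div_sub_div _ _ h1u.ne' h1t.ne', one_sub_div h1u.ne', div_le_div_iff₀ (by positivity) h1u]
    nlinarith [mul_nonneg (mul_nonneg (sub_nonneg.2 htu) ht) h1u.le]
  unfold marginalRate
  linarith

lemma marginalRate_nonneg {t : ℝ} (ht : 0 ≤ t) : 0 ≤ marginalRate t :=
  marginalRate_zero ▸ monotoneOn_marginalRate Set.self_mem_Ici ht ht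

/-- The concave map `w ↦ w * log (1 + c / w)` lies below its tangent lines. -/
lemma mul_log_one_add_div_le {c W w : ℝ} (hc : 0 ≤ c) (hW : 0 < W) (hw : 0 ≤ w) :
    w * log (1 + c / w) ≤ W * log (1 + c / W) + marginalRate (c / W) * (w - W) := by
  set t := c / W
  set u := c / w
  have ht : 0 ≤ t := by positivity
  have hu : 0 ≤ u := by positivity
  have hWt : W * t = c := mul_div_cancel₀ c hW.ne'
  have hwu : w * u ≤ c := by
    rcases hw.eq_or_lt with rfl | hw
    · simpa using hc
    · exact (mul_div_cancel₀ c hw.ne').le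
  have hlog : log (1 + u) ≤ log (1 + t) + ((1 + u) / (1 + t) - 1) := by
    have := log_le_sub_one_of_pos (x := (1 + u) / (1 + t)) (by positivity)
    rw [log_div (by positivity) (by positivity)] at this
    linarith
  calc w * log (1 + u) ≤ w * (log (1 + t) + ((1 + u) / (1 + t) - 1)) :=
        mul_le_mul_of_nonneg_left hlog hw
    _ = w * log (1 + t) + (w * u - w * t) / (1 + t) := by field_simp; ring
    _ ≤ w * log (1 + t) + (W * t - w * t) / (1 + t) := by gcongr _ + ?_ / _; linarith
    _ = W * log (1 + t) + marginalRate t * (w - W) := by unfold marginalRate; field_simp; ring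

/-- Sufficiency of the KKT conditions for maximizing `∑ w_k log (1 + c_k / w_k)` subject to
`0 ≤ w_k ≤ wb_k` and `∑ w_k ≤ wtot`, with multiplier `m` for the total-bandwidth constraint. -/
theorem sum_mul_log_le_of_kkt {ι : Type*} [Fintype ι] {c W wb w : ι → ℝ} {m wtot : ℝ}
    (hc : ∀ k, 0 ≤ c k) (hW : ∀ k, 0 < W k) (hm : 0 ≤ m) (hslack : m * (wtot - ∑ k, W k) = 0)
    (hkkt : ∀ k, (W k = wb k ∧ m ≤ marginalRate (c k / W k)) ∨ m = marginalRate (c k / W k))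
    (hw : ∀ k, 0 ≤ w k ∧ w k ≤ wb k) (hwsum : ∑ k, w k ≤ wtot) :
    ∑ k, w k * log (1 + c k / w k) ≤ ∑ k, W k * log (1 + c k / W k) := by
  have hterm (k : ι) :
      w k * log (1 + c k / w k) ≤ W k * log (1 + c k / W k) + m * (w k - W k) := by
    have htangent := mul_log_one_add_div_le (hc k) (hW k) (hw k).1
    rcases hkkt k with ⟨hWk, hmk⟩ | hmk
    · have := mul_le_mul_of_nonpos_right hmk (by linarith [(hw k).2] : w k - W k ≤ 0)
      linarith
    · rwa [hmk]
  calc ∑ k, w k * log (1 + c k / w k)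
      ≤ ∑ k, (W k * log (1 + c k / W k) + m * (w k - W k)) := sum_le_sum fun k _ => hterm k
    _ = ∑ k, W k * log (1 + c k / W k) + m * (∑ k, w k - wtot) := by
      rw [sum_add_distrib, ← mul_sum, sum_sub_distrib]
      linear_combination hslack
    _ ≤ ∑ k, W k * log (1 + c k / W k) := by
      nlinarith [mul_nonpos_of_nonneg_of_nonpos hm (sub_nonpos.2 hwsum)]

noncomputable def bandwidthLeft {K : ℕ} (wb : Fin K → ℝ) (wtot : ℝ) (m : ℕ) : ℝ :=
  wtot - ∑ k ∈ univ.filter (fun k : Fin K => (k : ℕ) < m), wb k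

noncomputable def powerTail {K : ℕ} (p : Fin K → ℝ) (m : ℕ) : ℝ :=
  ∑ k ∈ univ.filter (fun k : Fin K => m ≤ (k : ℕ)), p k

noncomputable def waterLevel {K : ℕ} (p wb : Fin K → ℝ) (wtot : ℝ) (m : ℕ) : ℝ :=
  bandwidthLeft wb wtot m / powerTail p m

section WaterFilling

variable {K : ℕ} {p wb : Fin K → ℝ} {wtot : ℝ} {K₁ : ℕ}

lemma dueShare_eq_waterLevel_mul (k : Fin K) :
    dueShare K p wb wtot k = waterLevel p wb wtot k * p k := by
  rw [waterLevel, div_mul_eq_mul_div]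
  rfl

lemma wopt_of_lt {k : Fin K} (hk : (k : ℕ) < K₁) : wopt K p wb wtot K₁ k = wb k :=
  if_pos hk

lemma wopt_of_le {k : Fin K} (hk : K₁ ≤ (k : ℕ)) :
    wopt K p wb wtot K₁ k = waterLevel p wb wtot K₁ * p k := by
  rw [wopt, if_neg hk.not_gt, waterLevel, div_mul_eq_mul_div]
  rfl

lemma bandwidthLeft_succ (k : Fin K) :
    bandwidthLeft wb wtot (k + 1) = bandwidthLeft wb wtot k - wb k := by
  have : univ.filter (fun j : Fin K => (j : ℕ) < k + 1)
      = insert k (univ.filter (fun j : Fin K => (j : ℕ) < k)) := by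
    ext j
    simp only [mem_filter, mem_insert, mem_univ, true_and, Fin.ext_iff]
    omega
  rw [bandwidthLeft, bandwidthLeft, this, sum_insert (by simp)]
  ring

lemma powerTail_eq_add (k : Fin K) : powerTail p k = p k + powerTail p (k + 1) := by
  have : univ.filter (fun j : Fin K => (k : ℕ) ≤ j)
      = insert k (univ.filter (fun j : Fin K => (k : ℕ) + 1 ≤ j)) := by
    ext j
    simp only [mem_filter, mem_insert, mem_univ, true_and, Fin.ext_iff]
    omega
  rw [powerTail, powerTail, this, sum_insert (by simp)]

lemma powerTail_nonneg (hp : ∀ k, 0 ≤ p k) (m : ℕ) : 0 ≤ powerTail p m :=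
  sum_nonneg fun k _ => hp k

lemma powerTail_pos (hp : ∀ k, 0 < p k) {m : ℕ} (hm : m < K) : 0 < powerTail p m :=
  sum_pos (fun k _ => hp k) ⟨⟨m, hm⟩, by simp⟩

lemma sum_wopt :
    ∑ k, wopt K p wb wtot K₁ k
      = wtot - bandwidthLeft wb wtot K₁ + waterLevel p wb wtot K₁ * powerTail p K₁ := by
  rw [← sum_filter_add_sum_filter_not univ (fun k : Fin K => (k : ℕ) < K₁),
    sum_congr rfl fun k hk => wopt_of_lt (mem_filter.1 hk).2,
    sum_congr rfl fun k hk => wopt_of_le (not_lt.1 (mem_filter.1 hk).2),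
    ← mul_sum, bandwidthLeft, powerTail]
  simp only [not_lt]
  ring

/-- Removing an oversized user raises the water level (in cross-multiplied form). -/
lemma bandwidthLeft_mul_powerTail_lt (hp : ∀ k, 0 < p k) {k : Fin K}
    (hk : wb k < dueShare K p wb wtot k) :
    bandwidthLeft wb wtot k * powerTail p (k + 1)
      < bandwidthLeft wb wtot (k + 1) * powerTail p k := by
  have hT := powerTail_pos hp k.isLt
  rw [dueShare_eq_waterLevel_mul, waterLevel, div_mul_eq_mul_div, lt_div_iff₀ hT] at hk
  rw [powerTail_eq_add k] at hk hT ⊢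
  rw [bandwidthLeft_succ]
  nlinarith

lemma bandwidthLeft_pos (hp : ∀ k, 0 < p k)
    (hover : ∀ k : Fin K, (k : ℕ) < K₁ → wb k < dueShare K p wb wtot k)
    (hwtot : 0 < wtot) (hK₁ : K₁ ≤ K) : 0 < bandwidthLeft wb wtot K₁ := by
  suffices ∀ m ≤ K₁, 0 < bandwidthLeft wb wtot m from this K₁ le_rfl
  intro m hm
  induction m with
  | zero => simpa [bandwidthLeft] using hwtot
  | succ m ih =>
    let k : Fin K := ⟨m, by omega⟩
    have hstep := bandwidthLeft_mul_powerTail_lt hp (hover k (show m < K₁ by omega))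
    have hprev := mul_nonneg (ih (by omega)).le (powerTail_nonneg (fun j => (hp j).le) (k + 1))
    exact pos_of_mul_pos_left (hprev.trans_lt hstep) (powerTail_pos hp k.isLt).le

lemma waterLevel_le (hp : ∀ k, 0 < p k)
    (hover : ∀ k : Fin K, (k : ℕ) < K₁ → wb k < dueShare K p wb wtot k) (hK₁ : K₁ < K)
    {m : ℕ} (hm : m ≤ K₁) : waterLevel p wb wtot m ≤ waterLevel p wb wtot K₁ := by
  induction K₁, hm using Nat.le_induction with
  | base => rfl
  | succ n hmn ih =>
    let k : Fin K := ⟨n, by omega⟩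
    have hstep := bandwidthLeft_mul_powerTail_lt hp (hover k n.lt_succ_self)
    refine (ih (fun j hj => hover j (by omega)) (by omega)).trans ?_
    rw [waterLevel, waterLevel, div_le_div_iff₀ (powerTail_pos hp k.isLt) (powerTail_pos hp hK₁)]
    exact hstep.le

lemma waterLevel_pos (hp : ∀ k, 0 < p k)
    (hover : ∀ k : Fin K, (k : ℕ) < K₁ → wb k < dueShare K p wb wtot k)
    (hwtot : 0 < wtot) (hK₁ : K₁ < K) : 0 < waterLevel p wb wtot K₁ :=
  div_pos (bandwidthLeft_pos hp hover hwtot hK₁.le) (powerTail_pos hp hK₁)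

lemma wb_lt_waterLevel_mul (hp : ∀ k, 0 < p k)
    (hover : ∀ k : Fin K, (k : ℕ) < K₁ → wb k < dueShare K p wb wtot k) (hK₁ : K₁ < K)
    {k : Fin K} (hk : (k : ℕ) < K₁) : wb k < waterLevel p wb wtot K₁ * p k :=
  calc wb k < dueShare K p wb wtot k := hover k hk
    _ = waterLevel p wb wtot k * p k := dueShare_eq_waterLevel_mul k
    _ ≤ waterLevel p wb wtot K₁ * p k :=
      mul_le_mul_of_nonneg_right (waterLevel_le hp hover hK₁ hk.le) (hp k).le

lemma mul_le_of_antitone_ratio (hwb : ∀ k, 0 < wb k)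
    (hord : ∀ i j : Fin K, i ≤ j → p j / wb j ≤ p i / wb i) {c : ℝ} (hc : 0 ≤ c)
    {i j : Fin K} (hij : i ≤ j) (hi : c * p i ≤ wb i) : c * p j ≤ wb j := by
  have hratio : c * (p j / wb j) ≤ 1 :=
    calc c * (p j / wb j) ≤ c * (p i / wb i) := mul_le_mul_of_nonneg_left (hord i j hij) hc
      _ = c * p i / wb i := mul_div_assoc' ..
      _ ≤ 1 := div_le_one_of_le₀ hi (hwb i).le
  calc c * p j = c * (p j / wb j) * wb j := by field_simp [(hwb j).ne']
    _ ≤ wb j := mul_le_of_le_one_left (hwb j).le hratio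

lemma waterLevel_mul_le_wb (hwb : ∀ k, 0 < wb k)
    (hord : ∀ i j : Fin K, i ≤ j → p j / wb j ≤ p i / wb i)
    (hchar : ∀ k : Fin K, (dueShare K p wb wtot k > wb k ↔ (k : ℕ) < K₁))
    (hlevel : 0 ≤ waterLevel p wb wtot K₁) {k : Fin K} (hk : K₁ ≤ (k : ℕ)) :
    waterLevel p wb wtot K₁ * p k ≤ wb k := by
  let k₀ : Fin K := ⟨K₁, hk.trans_lt k.isLt⟩
  have hk₀ : dueShare K p wb wtot k₀ ≤ wb k₀ := not_lt.1 fun h => lt_irrefl K₁ ((hchar k₀).1 h)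
  rw [dueShare_eq_waterLevel_mul] at hk₀
  exact mul_le_of_antitone_ratio hwb hord hlevel (Fin.le_def.2 hk) hk₀

lemma sum_wopt_le (hp : ∀ k, 0 < p k)
    (hover : ∀ k : Fin K, (k : ℕ) < K₁ → wb k < dueShare K p wb wtot k)
    (hwtot : 0 < wtot) (hK₁ : K₁ ≤ K) : ∑ k, wopt K p wb wtot K₁ k ≤ wtot := by
  have hA := bandwidthLeft_pos hp hover hwtot hK₁
  rw [sum_wopt, waterLevel]
  rcases (powerTail_nonneg (fun k => (hp k).le) K₁).eq_or_lt with hT | hT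
  · rw [← hT, mul_zero]
    linarith
  · rw [div_mul_cancel₀ _ hT.ne']
    linarith

lemma wopt_pos (hp : ∀ k, 0 < p k) (hwb : ∀ k, 0 < wb k)
    (hover : ∀ k : Fin K, (k : ℕ) < K₁ → wb k < dueShare K p wb wtot k)
    (hwtot : 0 < wtot) (k : Fin K) : 0 < wopt K p wb wtot K₁ k := by
  rcases lt_or_ge (k : ℕ) K₁ with hk | hk
  · rw [wopt_of_lt hk]
    exact hwb k
  · rw [wopt_of_le hk]
    exact mul_pos (waterLevel_pos hp hover hwtot (hk.trans_lt k.isLt)) (hp k)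

lemma wopt_le_wb (hp : ∀ k, 0 < p k) (hwb : ∀ k, 0 < wb k) (hwtot : 0 < wtot)
    (hord : ∀ i j : Fin K, i ≤ j → p j / wb j ≤ p i / wb i)
    (hchar : ∀ k : Fin K, (dueShare K p wb wtot k > wb k ↔ (k : ℕ) < K₁)) (k : Fin K) :
    wopt K p wb wtot K₁ k ≤ wb k := by
  rcases lt_or_ge (k : ℕ) K₁ with hk | hk
  · rw [wopt_of_lt hk]
  · have hlevel := waterLevel_pos hp (fun j hj => (hchar j).2 hj) hwtot (hk.trans_lt k.isLt)
    rw [wopt_of_le hk]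
    exact waterLevel_mul_le_wb hwb hord hchar hlevel.le hk

/-- The multiplier is the common marginal rate `marginalRate (1 / (N₀ λ))` of the users served
at water level `λ`, or `0` when every user is oversized. -/
lemma exists_kkt_multiplier (hp : ∀ k, 0 < p k) (hwb : ∀ k, 0 < wb k) {N₀ : ℝ} (hN : 0 < N₀)
    (hover : ∀ k : Fin K, (k : ℕ) < K₁ → wb k < dueShare K p wb wtot k)
    (hwtot : 0 < wtot) (hK₁ : K₁ ≤ K) :
    ∃ m, 0 ≤ m ∧ m * (wtot - ∑ k, wopt K p wb wtot K₁ k) = 0 ∧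
      ∀ k, (wopt K p wb wtot K₁ k = wb k ∧ m ≤ marginalRate (p k / N₀ / wopt K p wb wtot K₁ k)) ∨
        m = marginalRate (p k / N₀ / wopt K p wb wtot K₁ k) := by
  rcases hK₁.lt_or_eq with hlt | rfl
  · set level := waterLevel p wb wtot K₁ with hlevel_def
    have hlevel : 0 < level := waterLevel_pos hp hover hwtot hlt
    have hsum : ∑ k, wopt K p wb wtot K₁ k = wtot := by
      rw [sum_wopt, waterLevel, div_mul_cancel₀ _ (powerTail_pos hp hlt).ne']
      ring
    refine ⟨marginalRate (1 / (N₀ * level)), marginalRate_nonneg (by positivity),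
      by rw [hsum, sub_self, mul_zero], fun k => ?_⟩
    have := hp k
    have := hwb k
    rcases lt_or_ge (k : ℕ) K₁ with hk | hk
    · rw [wopt_of_lt hk]
      refine .inl ⟨rfl, monotoneOn_marginalRate (Set.mem_Ici.2 (by positivity))
        (Set.mem_Ici.2 (by positivity)) ?_⟩
      calc 1 / (N₀ * level) = p k / (N₀ * (level * p k)) := by field_simp
        _ ≤ p k / (N₀ * wb k) := by gcongr; exact (wb_lt_waterLevel_mul hp hover hlt hk).le
        _ = p k / N₀ / wb k := (div_div ..).symm
    · rw [wopt_of_le hk, ← hlevel_def]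
      exact .inr (congrArg marginalRate (by field_simp))
  · refine ⟨0, le_rfl, zero_mul _, fun k => .inl ⟨wopt_of_lt k.isLt, marginalRate_nonneg ?_⟩⟩
    rw [wopt_of_lt k.isLt]
    exact div_nonneg (div_pos (hp k) hN).le (hwb k).le

end WaterFilling

/-- The allocation `w*` (upper limits for the `K₁` oversized users, proportional share of the
remaining bandwidth for the rest) is feasible and maximizes the FDMA sum rate subject to
`0 ≤ w_k ≤ w̄_k` and `∑ w_k ≤ w_tot`. -/
theorem stmt_3 (K : ℕ) (p wb : Fin K → ℝ) (hp : ∀ k, 0 < p k) (hwb : ∀ k, 0 < wb k)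
    (wtot N₀ : ℝ) (hwtot : 0 < wtot) (hN : 0 < N₀)
    (hord : ∀ i j : Fin K, i ≤ j → p j / wb j ≤ p i / wb i)
    (K₁ : ℕ) (hK₁ : K₁ ≤ K)
    (hchar : ∀ k : Fin K, (dueShare K p wb wtot k > wb k ↔ (k : ℕ) < K₁)) :
    (∀ k, 0 ≤ wopt K p wb wtot K₁ k ∧ wopt K p wb wtot K₁ k ≤ wb k) ∧
    (∑ k, wopt K p wb wtot K₁ k) ≤ wtot ∧
    (∀ w : Fin K → ℝ, (∀ k, 0 ≤ w k ∧ w k ≤ wb k) → (∑ k, w k) ≤ wtot →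
      (∑ k, w k * Real.logb 2 (1 + p k / (N₀ * w k))) ≤
      (∑ k, wopt K p wb wtot K₁ k * Real.logb 2 (1 + p k / (N₀ * wopt K p wb wtot K₁ k)))) := by
  have hover : ∀ k : Fin K, (k : ℕ) < K₁ → wb k < dueShare K p wb wtot k :=
    fun k hk => (hchar k).2 hk
  have hpos := wopt_pos hp hwb hover hwtot
  refine ⟨fun k => ⟨(hpos k).le, wopt_le_wb hp hwb hwtot hord hchar k⟩,
    sum_wopt_le hp hover hwtot hK₁, fun w hw hwsum => ?_⟩
  obtain ⟨m, hm, hslack, hkkt⟩ := exists_kkt_multiplier hp hwb hN hover hwtot hK₁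
  have hrate := sum_mul_log_le_of_kkt (c := fun k => p k / N₀) (fun k => (div_pos (hp k) hN).le)
    hpos hm hslack hkkt hw hwsum
  simp only [logb, ← mul_div_assoc, ← sum_div, ← div_div]
  exact div_le_div_of_nonneg_right hrate (log_nonneg one_le_two)
end

section
/- In the optimal restricted FDMA allocation, the PSDs p_k/w*_k are non-increasing in the user index k, the PSDs of all non-oversized users (k > K₁) are equal, and if both oversized and non-oversized users exist then p_{K₁}/w*_{K₁} > p_{K₁+1}/w*_{K₁+1}. -/
open Finset

/-- Partial sum of bandwidth caps of the first `m` users. -/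
noncomputable def Bsum (K : ℕ) (wb : Fin K → ℝ) (m : ℕ) : ℝ :=
  ∑ k' ∈ Finset.univ.filter (fun k' : Fin K => (k' : ℕ) < m), wb k'

/-- Tail sum of powers of users from `m` on. -/
noncomputable def Psum (K : ℕ) (p : Fin K → ℝ) (m : ℕ) : ℝ :=
  ∑ k' ∈ Finset.univ.filter (fun k' : Fin K => m ≤ (k' : ℕ)), p k'

lemma Bsum_zero (K : ℕ) (wb : Fin K → ℝ) : Bsum K wb 0 = 0 := by
  simp [Bsum]

lemma Bsum_succ (K : ℕ) (wb : Fin K → ℝ) (m : ℕ) (h : m < K) :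
    Bsum K wb (m + 1) = Bsum K wb m + wb ⟨m, h⟩ := by
  have hset : Finset.univ.filter (fun k' : Fin K => (k' : ℕ) < m + 1)
      = insert ⟨m, h⟩ (Finset.univ.filter (fun k' : Fin K => (k' : ℕ) < m)) := by
    ext x
    simp [Fin.ext_iff]
    omega
  rw [Bsum, hset, Finset.sum_insert (by simp), Bsum]
  ring

lemma Psum_succ (K : ℕ) (p : Fin K → ℝ) (m : ℕ) (h : m < K) :
    Psum K p m = p ⟨m, h⟩ + Psum K p (m + 1) := by
  have hset : Finset.univ.filter (fun k' : Fin K => m ≤ (k' : ℕ))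
      = insert ⟨m, h⟩ (Finset.univ.filter (fun k' : Fin K => m + 1 ≤ (k' : ℕ))) := by
    ext x
    simp [Fin.ext_iff]
    omega
  rw [Psum, hset, Finset.sum_insert (by simp), Psum]

lemma Psum_pos (K : ℕ) (p : Fin K → ℝ) (hp : ∀ k, 0 < p k) (m : ℕ) (h : m < K) :
    0 < Psum K p m :=
  Finset.sum_pos (fun i _ => hp i) ⟨⟨m, h⟩, by simp⟩

lemma le_Psum (K : ℕ) (p : Fin K → ℝ) (hp : ∀ k, 0 < p k) (m : ℕ) (h : m < K) :
    p ⟨m, h⟩ ≤ Psum K p m :=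
  Finset.single_le_sum (f := p) (fun i _ => (hp i).le) (by simp)

lemma dueShare_eq (K : ℕ) (p wb : Fin K → ℝ) (wtot : ℝ) (m : ℕ) (h : m < K) :
    dueShare K p wb wtot ⟨m, h⟩
      = (wtot - Bsum K wb m) * p ⟨m, h⟩ / Psum K p m := by
  have h1 : Finset.univ.filter (fun k' : Fin K => k' < (⟨m, h⟩ : Fin K))
      = Finset.univ.filter (fun k' : Fin K => (k' : ℕ) < m) := by
    ext x; simp [Fin.lt_def]
  have h2 : Finset.univ.filter (fun k' : Fin K => (⟨m, h⟩ : Fin K) ≤ k')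
      = Finset.univ.filter (fun k' : Fin K => m ≤ (k' : ℕ)) := by
    ext x; simp [Fin.le_def]
  rw [dueShare, h1, h2, Bsum, Psum]

lemma wopt_eq_of_le (K : ℕ) (p wb : Fin K → ℝ) (wtot : ℝ) (K₁ : ℕ) (k : Fin K)
    (h : K₁ ≤ (k : ℕ)) :
    wopt K p wb wtot K₁ k = (wtot - Bsum K wb K₁) * p k / Psum K p K₁ := by
  rw [wopt, if_neg (by omega), Bsum, Psum]

/-- In the optimal restricted-FDMA allocation, the user PSDs `p_k/w*_k` are non-increasing in
`k`, equal among all non-oversized users, and strictly larger for the last oversized user than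
for the first non-oversized user (when both exist). -/
theorem stmt_4 (K : ℕ) (p wb : Fin K → ℝ) (hp : ∀ k, 0 < p k) (hwb : ∀ k, 0 < wb k)
    (wtot : ℝ) (hwtot : 0 < wtot)
    (hord : ∀ i j : Fin K, i ≤ j → p j / wb j ≤ p i / wb i)
    (K₁ : ℕ) (hK₁ : K₁ ≤ K)
    (hchar : ∀ k : Fin K, (dueShare K p wb wtot k > wb k ↔ (k : ℕ) < K₁)) :
    (∀ i j : Fin K, i ≤ j →
      p j / wopt K p wb wtot K₁ j ≤ p i / wopt K p wb wtot K₁ i) ∧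
    (∀ i j : Fin K, K₁ ≤ (i : ℕ) → K₁ ≤ (j : ℕ) →
      p i / wopt K p wb wtot K₁ i = p j / wopt K p wb wtot K₁ j) ∧
    (∀ (h1 : 1 ≤ K₁) (h2 : K₁ < K),
      p ⟨K₁, h2⟩ / wopt K p wb wtot K₁ ⟨K₁, h2⟩ <
      p ⟨K₁ - 1, by omega⟩ / wopt K p wb wtot K₁ ⟨K₁ - 1, by omega⟩) := by
  -- Positivity of remaining bandwidth after serving the first `m` oversized users.
  have claim1 : ∀ m, m ≤ K₁ → 0 < wtot - Bsum K wb m := by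
    intro m
    induction m with
    | zero => intro _; simpa [Bsum_zero] using hwtot
    | succ m ih =>
      intro h
      have hm : m < K := by omega
      have hW := ih (by omega)
      have hP := Psum_pos K p hp m hm
      have hple := le_Psum K p hp m hm
      have hc : wb ⟨m, hm⟩ < (wtot - Bsum K wb m) * p ⟨m, hm⟩ / Psum K p m := by
        have hc0 := (hchar ⟨m, hm⟩).mpr (by simpa using (by omega : m < K₁))
        rwa [dueShare_eq] at hc0
      have hc' : wb ⟨m, hm⟩ * Psum K p m < (wtot - Bsum K wb m) * p ⟨m, hm⟩ :=
        (lt_div_iff₀ hP).mp hc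
      rw [Bsum_succ K wb m hm]
      nlinarith [hp ⟨m, hm⟩, hwb ⟨m, hm⟩,
        mul_le_mul_of_nonneg_left hple hW.le]
  -- The shared PSD is at most the would-be PSD at any earlier stage.
  have claim2 : ∀ d m, m + d = K₁ → K₁ < K →
      Psum K p K₁ / (wtot - Bsum K wb K₁) ≤ Psum K p m / (wtot - Bsum K wb m) := by
    intro d
    induction d with
    | zero => intro m hm _; rw [show m = K₁ by omega]
    | succ d ih =>
      intro m hm hKlt
      refine (ih (m + 1) (by omega) hKlt).trans ?_
      have hm' : m < K := by omega
      have hW := claim1 m (by omega)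
      have hW1 := claim1 (m + 1) (by omega)
      have hP := Psum_pos K p hp m hm'
      have hP1 := Psum_pos K p hp (m + 1) (by omega)
      have hc : wb ⟨m, hm'⟩ < (wtot - Bsum K wb m) * p ⟨m, hm'⟩ / Psum K p m := by
        have hc0 := (hchar ⟨m, hm'⟩).mpr (by simpa using (by omega : m < K₁))
        rwa [dueShare_eq] at hc0
      have hc' : wb ⟨m, hm'⟩ * Psum K p m < (wtot - Bsum K wb m) * p ⟨m, hm'⟩ :=
        (lt_div_iff₀ hP).mp hc
      rw [div_le_div_iff₀ hW1 hW]
      have hBs := Bsum_succ K wb m hm'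
      have hPs := Psum_succ K p m hm'
      nlinarith [hc', hBs, hPs]
  -- For any oversized user, its PSD strictly exceeds the shared PSD.
  have key : ∀ i : Fin K, (i : ℕ) < K₁ → K₁ < K →
      Psum K p K₁ / (wtot - Bsum K wb K₁) < p i / wb i := by
    intro i hi hKlt
    have hW := claim1 (i : ℕ) (by omega)
    have hP := Psum_pos K p hp (i : ℕ) i.isLt
    have hc : wb i < (wtot - Bsum K wb (i : ℕ)) * p i / Psum K p (i : ℕ) := by
      have hc0 := (hchar i).mpr hi
      have h' := dueShare_eq K p wb wtot (i : ℕ) i.isLt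
      rw [Fin.eta] at h'
      rwa [h'] at hc0
    have hc' : wb i * Psum K p (i : ℕ) < (wtot - Bsum K wb (i : ℕ)) * p i :=
      (lt_div_iff₀ hP).mp hc
    refine lt_of_le_of_lt (claim2 (K₁ - (i : ℕ)) (i : ℕ) (by omega) hKlt) ?_
    rw [div_lt_div_iff₀ hW (hwb i)]
    nlinarith [hc']
  -- The shared PSD of non-oversized users.
  have psd : ∀ k : Fin K, K₁ ≤ (k : ℕ) →
      p k / wopt K p wb wtot K₁ k = Psum K p K₁ / (wtot - Bsum K wb K₁) := by
    intro k hk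
    have hKlt : K₁ < K := lt_of_le_of_lt hk k.isLt
    have hW := claim1 K₁ le_rfl
    have hP := Psum_pos K p hp K₁ hKlt
    have hden : (0:ℝ) < (wtot - Bsum K wb K₁) * p k / Psum K p K₁ := div_pos (mul_pos hW (hp k)) hP
    rw [wopt_eq_of_le K p wb wtot K₁ k hk, div_eq_div_iff hden.ne' hW.ne']
    field_simp
  have wopt_lt : ∀ k : Fin K, (k : ℕ) < K₁ → wopt K p wb wtot K₁ k = wb k := by
    intro k hk
    rw [wopt, if_pos hk]
  refine ⟨?_, ?_, ?_⟩
  · intro i j hij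
    have hij' : (i : ℕ) ≤ (j : ℕ) := hij
    by_cases hj : (j : ℕ) < K₁
    · have hi : (i : ℕ) < K₁ := by omega
      rw [wopt_lt i hi, wopt_lt j hj]
      exact hord i j hij
    · push_neg at hj
      rw [psd j hj]
      by_cases hi : (i : ℕ) < K₁
      · have hKlt : K₁ < K := lt_of_le_of_lt hj j.isLt
        rw [wopt_lt i hi]
        exact (key i hi hKlt).le
      · push_neg at hi
        rw [psd i hi]
  · intro i j hi hj
    rw [psd i hi, psd j hj]
  · intro h1 h2
    have hi : ((⟨K₁ - 1, by omega⟩ : Fin K) : ℕ) < K₁ := by simp; omega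
    rw [psd ⟨K₁, h2⟩ (by simp), wopt_lt ⟨K₁ - 1, by omega⟩ hi]
    exact key ⟨K₁ - 1, by omega⟩ hi h2
end

section
/- If the K₁-th user is oversized (i.e., ŵ_{K₁} > w̄_{K₁} with K₁ ≥ 1), then w_tot − ∑_{k=1}^{K₁} w̄_k > 0; that is, after all oversized users are assigned their bandwidth upper limits, strictly positive bandwidth remains. -/
/-!
Since the due share `ŵ_k` is the remaining budget `w_tot − ∑_{k'<k} w̄_{k'}` scaled by the factor
`p_k / ∑_{k' ≥ k} p_{k'} ∈ (0, 1]`, a due share exceeding the positive limit `w̄_k` forces the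
remaining budget itself to exceed `w̄_k`. Taking `k = K₁` gives the claim.
-/

open Finset

lemma lt_of_lt_mul_of_le_one_of_nonneg {α : Type*} [Semiring α] [LinearOrder α]
    [IsStrictOrderedRing α] {x c w : α} (hc₀ : 0 < c) (hc₁ : c ≤ 1) (hw : 0 ≤ w)
    (h : w < x * c) : w < x := by
  have hx : 0 < x := pos_of_mul_pos_left (hw.trans_lt h) hc₀.le
  exact h.trans_le (mul_le_of_le_one_right hx.le hc₁)

lemma lt_sub_sum_of_lt_dueShare {K : ℕ} {p wb : Fin K → ℝ} {wtot w : ℝ} (hp : ∀ k, 0 < p k)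
    {k : Fin K} (hw : 0 ≤ w) (h : w < dueShare K p wb wtot k) :
    w < wtot - ∑ k' ∈ univ.filter (fun k' : Fin K => k' < k), wb k' := by
  have hk : k ∈ univ.filter (fun k' : Fin K => k ≤ k') := by simp
  have hS : 0 < ∑ k' ∈ univ.filter (fun k' : Fin K => k ≤ k'), p k' :=
    sum_pos (fun i _ => hp i) ⟨k, hk⟩
  refine lt_of_lt_mul_of_le_one_of_nonneg (div_pos (hp k) hS) ?_ hw ?_
  · exact (div_le_one hS).2 (single_le_sum (fun i _ => (hp i).le) hk)
  · rwa [dueShare, mul_div_assoc] at h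

lemma sum_filter_val_lt_succ {M : Type*} [AddCommMonoid M] {K : ℕ} (f : Fin K → M)
    (i : Fin K) :
    ∑ k ∈ univ.filter (fun k : Fin K => (k : ℕ) < i + 1), f k
      = f i + ∑ k ∈ univ.filter (fun k : Fin K => k < i), f k := by
  have hset : univ.filter (fun k : Fin K => (k : ℕ) < i + 1)
      = insert i (univ.filter (fun k : Fin K => k < i)) := by
    ext k
    simp only [mem_filter, mem_univ, true_and, mem_insert, Fin.lt_def, Fin.ext_iff]
    omega
  rw [hset, sum_insert (by simp)]

/-- If the `K₁`-th user (0-based index `K₁ - 1`) is oversized, then after all `K₁` oversized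
users are assigned their bandwidth upper limits, strictly positive bandwidth remains:
`w_tot − ∑_{k ≤ K₁} w̄_k > 0`. -/
theorem stmt_5 (K : ℕ) (p wb : Fin K → ℝ) (hp : ∀ k, 0 < p k) (hwb : ∀ k, 0 < wb k)
    (wtot : ℝ)
    (K₁ : ℕ) (hK₁ : K₁ ≤ K) (h1 : 1 ≤ K₁)
    (hover : dueShare K p wb wtot ⟨K₁ - 1, by omega⟩ > wb ⟨K₁ - 1, by omega⟩) :
    0 < wtot - ∑ k ∈ Finset.univ.filter (fun k : Fin K => (k : ℕ) < K₁), wb k := by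
  set i : Fin K := ⟨K₁ - 1, by omega⟩
  have hK₁i : K₁ = (i : ℕ) + 1 := by simp only [i]; omega
  have hrem := lt_sub_sum_of_lt_dueShare hp (hwb i).le hover
  rw [hK₁i, sum_filter_val_lt_succ]
  linarith
end

section
/- The maximum sum rate of the restricted FDMA system satisfies ∑_{k≤K₁} w̄_k·log(1 + p_k/(N₀·w̄_k)) + (w_tot − ∑_{k≤K₁} w̄_k)·log(1 + (∑_{k>K₁} p_k)/(N₀·(w_tot − ∑_{k≤K₁} w̄_k))) ≤ w_tot·log(1 + (∑_k p_k)/(N₀·w_tot)), with equality if and only if K₁ = 0, i.e., if and only if w_tot·p₁/(∑_k p_k) ≤ w̄₁. -/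
open Real Finset

lemma two_point (N₀ : ℝ) (hN : 0 < N₀) (w1 w2 P1 P2 : ℝ)
    (hw1 : 0 < w1) (hw2 : 0 < w2) (hP1 : 0 ≤ P1) (hP2 : 0 ≤ P2) :
    w1 * Real.logb 2 (1 + P1 / (N₀ * w1)) + w2 * Real.logb 2 (1 + P2 / (N₀ * w2))
      ≤ (w1 + w2) * Real.logb 2 (1 + (P1 + P2) / (N₀ * (w1 + w2))) := by
  set y1 : ℝ := 1 + P1 / (N₀ * w1) with hy1def
  set y2 : ℝ := 1 + P2 / (N₀ * w2) with hy2def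
  have hy1 : 0 < y1 := by rw [hy1def]; positivity
  have hy2 : 0 < y2 := by rw [hy2def]; positivity
  have hW : 0 < w1 + w2 := by linarith
  have hμν : w1 / (w1 + w2) + w2 / (w1 + w2) = 1 := by field_simp
  have key := strictConcaveOn_log_Ioi.concaveOn.2 (Set.mem_Ioi.2 hy1) (Set.mem_Ioi.2 hy2)
    (le_of_lt (by positivity : (0:ℝ) < w1 / (w1 + w2)))
    (le_of_lt (by positivity : (0:ℝ) < w2 / (w1 + w2))) hμν
  simp only [smul_eq_mul] at key
  have hmix : w1 / (w1 + w2) * y1 + w2 / (w1 + w2) * y2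
      = 1 + (P1 + P2) / (N₀ * (w1 + w2)) := by
    rw [hy1def, hy2def]; field_simp; ring
  rw [hmix] at key
  have hlog2 : (0:ℝ) < Real.log 2 := Real.log_pos one_lt_two
  have h2 : w1 * Real.log y1 + w2 * Real.log y2
      ≤ (w1 + w2) * Real.log (1 + (P1 + P2) / (N₀ * (w1 + w2))) := by
    have := mul_le_mul_of_nonneg_left key (le_of_lt hW)
    calc w1 * Real.log y1 + w2 * Real.log y2
        = (w1 + w2) * (w1 / (w1 + w2) * Real.log y1 + w2 / (w1 + w2) * Real.log y2) := by
          field_simp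
      _ ≤ _ := this
  have e1 : w1 * Real.logb 2 y1 + w2 * Real.logb 2 y2
      = (w1 * Real.log y1 + w2 * Real.log y2) / Real.log 2 := by
    simp only [Real.logb]; ring
  have e2 : (w1 + w2) * Real.logb 2 (1 + (P1 + P2) / (N₀ * (w1 + w2)))
      = ((w1 + w2) * Real.log (1 + (P1 + P2) / (N₀ * (w1 + w2)))) / Real.log 2 := by
    simp only [Real.logb]; ring
  rw [e1, e2]
  gcongr

lemma two_point_strict (N₀ : ℝ) (hN : 0 < N₀) (w1 w2 P1 P2 : ℝ)
    (hw1 : 0 < w1) (hw2 : 0 < w2) (hP1 : 0 ≤ P1) (hP2 : 0 ≤ P2)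
    (hne : P1 * w2 ≠ P2 * w1) :
    w1 * Real.logb 2 (1 + P1 / (N₀ * w1)) + w2 * Real.logb 2 (1 + P2 / (N₀ * w2))
      < (w1 + w2) * Real.logb 2 (1 + (P1 + P2) / (N₀ * (w1 + w2))) := by
  set y1 : ℝ := 1 + P1 / (N₀ * w1) with hy1def
  set y2 : ℝ := 1 + P2 / (N₀ * w2) with hy2def
  have hy1 : 0 < y1 := by rw [hy1def]; positivity
  have hy2 : 0 < y2 := by rw [hy2def]; positivity
  have hW : 0 < w1 + w2 := by linarith
  have hμν : w1 / (w1 + w2) + w2 / (w1 + w2) = 1 := by field_simp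
  have hy12 : y1 ≠ y2 := by
    rw [hy1def, hy2def]
    intro h
    apply hne
    field_simp at h
    nlinarith [h]
  have key := strictConcaveOn_log_Ioi.2 (Set.mem_Ioi.2 hy1) (Set.mem_Ioi.2 hy2) hy12
    (by positivity : (0:ℝ) < w1 / (w1 + w2))
    (by positivity : (0:ℝ) < w2 / (w1 + w2)) hμν
  simp only [smul_eq_mul] at key
  have hmix : w1 / (w1 + w2) * y1 + w2 / (w1 + w2) * y2
      = 1 + (P1 + P2) / (N₀ * (w1 + w2)) := by
    rw [hy1def, hy2def]; field_simp; ring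
  rw [hmix] at key
  have hlog2 : (0:ℝ) < Real.log 2 := Real.log_pos one_lt_two
  have h2 : w1 * Real.log y1 + w2 * Real.log y2
      < (w1 + w2) * Real.log (1 + (P1 + P2) / (N₀ * (w1 + w2))) := by
    have := mul_lt_mul_of_pos_left key hW
    calc w1 * Real.log y1 + w2 * Real.log y2
        = (w1 + w2) * (w1 / (w1 + w2) * Real.log y1 + w2 / (w1 + w2) * Real.log y2) := by
          field_simp
      _ < _ := this
  have e1 : w1 * Real.logb 2 y1 + w2 * Real.logb 2 y2
      = (w1 * Real.log y1 + w2 * Real.log y2) / Real.log 2 := by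
    simp only [Real.logb]; ring
  have e2 : (w1 + w2) * Real.logb 2 (1 + (P1 + P2) / (N₀ * (w1 + w2)))
      = ((w1 + w2) * Real.log (1 + (P1 + P2) / (N₀ * (w1 + w2)))) / Real.log 2 := by
    simp only [Real.logb]; ring
  rw [e1, e2]
  gcongr

lemma sum_aux {ι : Type*} (N₀ : ℝ) (hN : 0 < N₀) (s : Finset ι) (w P : ι → ℝ)
    (hw : ∀ i ∈ s, 0 < w i) (hP : ∀ i ∈ s, 0 ≤ P i) (Wr Pr : ℝ) (hWr : 0 < Wr) (hPr : 0 ≤ Pr) :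
    (∑ i ∈ s, w i * Real.logb 2 (1 + P i / (N₀ * w i))) + Wr * Real.logb 2 (1 + Pr / (N₀ * Wr))
      ≤ ((∑ i ∈ s, w i) + Wr) *
        Real.logb 2 (1 + ((∑ i ∈ s, P i) + Pr) / (N₀ * ((∑ i ∈ s, w i) + Wr))) := by
  induction s using Finset.cons_induction with
  | empty => simp
  | cons a t ha ih =>
    have ih' := ih (fun i hi => hw i (Finset.mem_cons_of_mem hi))
      (fun i hi => hP i (Finset.mem_cons_of_mem hi))
    have hwt : 0 < (∑ i ∈ t, w i) + Wr := by
      have : 0 ≤ ∑ i ∈ t, w i :=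
        Finset.sum_nonneg fun i hi => (hw i (Finset.mem_cons_of_mem hi)).le
      linarith
    have hPt : 0 ≤ (∑ i ∈ t, P i) + Pr := by
      have : 0 ≤ ∑ i ∈ t, P i :=
        Finset.sum_nonneg fun i hi => hP i (Finset.mem_cons_of_mem hi)
      linarith
    have tp := two_point N₀ hN (w a) ((∑ i ∈ t, w i) + Wr) (P a) ((∑ i ∈ t, P i) + Pr)
      (hw a (Finset.mem_cons_self a t)) hwt (hP a (Finset.mem_cons_self a t)) hPt
    rw [Finset.sum_cons, Finset.sum_cons, Finset.sum_cons, add_assoc (w a), add_assoc (P a)]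
    linarith [ih', tp]

/-- The maximum restricted-FDMA sum rate is at most the MAC sum capacity, with equality iff
there is no oversized user (`K₁ = 0`), iff `w_tot·p₁/∑p ≤ w̄₁`. -/
theorem stmt_6 (K : ℕ) (hK : 0 < K) (p wb : Fin K → ℝ) (hp : ∀ k, 0 < p k)
    (hwb : ∀ k, 0 < wb k) (wtot N₀ : ℝ) (hwtot : 0 < wtot) (hN : 0 < N₀)
    (hord : ∀ i j : Fin K, i ≤ j → p j / wb j ≤ p i / wb i)
    (K₁ : ℕ) (hK₁ : K₁ ≤ K)
    (hchar : ∀ k : Fin K, (dueShare K p wb wtot k > wb k ↔ (k : ℕ) < K₁)) :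
    let CF : ℝ :=
      (∑ k ∈ Finset.univ.filter (fun k : Fin K => (k : ℕ) < K₁),
        wb k * Real.logb 2 (1 + p k / (N₀ * wb k))) +
      (wtot - ∑ k ∈ Finset.univ.filter (fun k : Fin K => (k : ℕ) < K₁), wb k) *
        Real.logb 2 (1 +
          (∑ k ∈ Finset.univ.filter (fun k : Fin K => K₁ ≤ (k : ℕ)), p k) /
          (N₀ * (wtot - ∑ k ∈ Finset.univ.filter (fun k : Fin K => (k : ℕ) < K₁), wb k)))
    let CMAC : ℝ := wtot * Real.logb 2 (1 + (∑ k, p k) / (N₀ * wtot))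
    CF ≤ CMAC ∧ (CF = CMAC ↔ K₁ = 0) ∧
    (K₁ = 0 ↔ wtot * p ⟨0, hK⟩ / (∑ k, p k) ≤ wb ⟨0, hK⟩) := by
  
  intro CF CMAC
  have hptot : 0 < ∑ k, p k := Finset.sum_pos (fun i _ => hp i) ⟨⟨0, hK⟩, Finset.mem_univ _⟩
  -- notation
  set S1 : Finset (Fin K) := Finset.univ.filter (fun k : Fin K => (k : ℕ) < K₁) with hS1def
  set Pr : ℝ := ∑ k ∈ Finset.univ.filter (fun k : Fin K => K₁ ≤ (k : ℕ)), p k with hPrdef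
  have hPr : 0 ≤ Pr := Finset.sum_nonneg fun i _ => (hp i).le
  have hsplit : (∑ k ∈ S1, p k) + Pr = ∑ k, p k := by
    rw [hS1def, hPrdef]
    rw [show (Finset.univ.filter (fun k : Fin K => K₁ ≤ (k : ℕ)))
        = Finset.univ.filter (fun k : Fin K => ¬ (k : ℕ) < K₁) by
      apply Finset.filter_congr; intro x _; simp]
    exact Finset.sum_filter_add_sum_filter_not _ _ _
  -- positivity of the residual bandwidth
  have hWr : 0 < wtot - ∑ k ∈ S1, wb k := by
    rcases Nat.eq_zero_or_pos K₁ with h0 | h1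
    · have : S1 = ∅ := by rw [hS1def]; ext x; simp [h0]
      rw [this]; simpa using hwtot
    · have hKK : K₁ - 1 < K := by omega
      have hk := (hchar ⟨K₁ - 1, hKK⟩).2 (Nat.sub_lt h1 one_pos)
      unfold dueShare at hk
      set A : ℝ := ∑ k' ∈ Finset.univ.filter (fun k' : Fin K => k' < ⟨K₁ - 1, hKK⟩), wb k'
        with hAdef
      set B : ℝ := ∑ k' ∈ Finset.univ.filter (fun k' : Fin K => (⟨K₁ - 1, hKK⟩ : Fin K) ≤ k'),
        p k' with hBdef
      have hB : 0 < B := by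
        rw [hBdef]
        exact Finset.sum_pos (fun i _ => hp i) ⟨⟨K₁ - 1, hKK⟩, by simp⟩
      have hpB : p ⟨K₁ - 1, hKK⟩ ≤ B := by
        rw [hBdef]
        exact Finset.single_le_sum (fun i _ => (hp i).le) (by simp)
      have hk' : wb ⟨K₁ - 1, hKK⟩ * B < (wtot - A) * p ⟨K₁ - 1, hKK⟩ := by
        rwa [gt_iff_lt, lt_div_iff₀ hB] at hk
      have hwA : wb ⟨K₁ - 1, hKK⟩ < wtot - A := by
        nlinarith [hp ⟨K₁ - 1, hKK⟩, hwb ⟨K₁ - 1, hKK⟩]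
      have hsum : ∑ k ∈ S1, wb k = A + wb ⟨K₁ - 1, hKK⟩ := by
        have hset : S1 = insert (⟨K₁ - 1, hKK⟩ : Fin K)
            (Finset.univ.filter (fun k' : Fin K => k' < ⟨K₁ - 1, hKK⟩)) := by
          ext x
          simp only [hS1def, Finset.mem_filter, Finset.mem_univ, true_and,
            Finset.mem_insert, Fin.lt_def, Fin.ext_iff]
          omega
        rw [hset, Finset.sum_insert (by simp [Fin.lt_def]), hAdef]
        ring
      linarith
  -- the main inequality
  have main : CF ≤ CMAC := by
    have h := sum_aux N₀ hN S1 wb p (fun i _ => hwb i) (fun i _ => (hp i).le)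
      (wtot - ∑ k ∈ S1, wb k) Pr hWr hPr
    rw [show (∑ k ∈ S1, wb k) + (wtot - ∑ k ∈ S1, wb k) = wtot by ring, hsplit] at h
    exact h
  -- dueShare at user 0
  have e0 : dueShare K p wb wtot ⟨0, hK⟩ = wtot * p ⟨0, hK⟩ / ∑ k, p k := by
    unfold dueShare
    have f1 : Finset.univ.filter (fun k' : Fin K => k' < (⟨0, hK⟩ : Fin K)) = ∅ := by
      ext x; simp [Fin.lt_def]
    have f2 : Finset.univ.filter (fun k' : Fin K => (⟨0, hK⟩ : Fin K) ≤ k') = Finset.univ := by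
      ext x; simp [Fin.le_def]
    rw [f1, f2]
    simp
  -- strict inequality when K₁ > 0
  have strict : 0 < K₁ → CF < CMAC := by
    intro h1
    have h0d := (hchar ⟨0, hK⟩).2 h1
    rw [e0] at h0d
    have hkey : wb ⟨0, hK⟩ * (∑ k, p k) < wtot * p ⟨0, hK⟩ := by
      rwa [gt_iff_lt, lt_div_iff₀ hptot] at h0d
    have mem0 : (⟨0, hK⟩ : Fin K) ∈ S1 := by
      rw [hS1def]; simp [h1]
    have h2 := sum_aux N₀ hN (S1.erase ⟨0, hK⟩) wb p
      (fun i _ => hwb i) (fun i _ => (hp i).le) (wtot - ∑ k ∈ S1, wb k) Pr hWr hPr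
    set W2 : ℝ := (∑ k ∈ S1.erase ⟨0, hK⟩, wb k) + (wtot - ∑ k ∈ S1, wb k) with hW2def
    set P2 : ℝ := (∑ k ∈ S1.erase ⟨0, hK⟩, p k) + Pr with hP2def
    have hsw := Finset.add_sum_erase S1 wb mem0
    have hsp := Finset.add_sum_erase S1 p mem0
    have hW2 : wb ⟨0, hK⟩ + W2 = wtot := by rw [hW2def]; linarith
    have hP2tot : p ⟨0, hK⟩ + P2 = ∑ k, p k := by rw [hP2def]; linarith
    have hW2pos : 0 < W2 := by
      rw [hW2def]
      have : 0 ≤ ∑ k ∈ S1.erase ⟨0, hK⟩, wb k := Finset.sum_nonneg fun i _ => (hwb i).le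
      linarith
    have hP2nn : 0 ≤ P2 := by
      rw [hP2def]
      have : 0 ≤ ∑ k ∈ S1.erase ⟨0, hK⟩, p k := Finset.sum_nonneg fun i _ => (hp i).le
      linarith
    have hne : p ⟨0, hK⟩ * W2 ≠ P2 * wb ⟨0, hK⟩ := by
      have eW : W2 = wtot - wb ⟨0, hK⟩ := by linarith
      have eP : P2 = (∑ k, p k) - p ⟨0, hK⟩ := by linarith
      have : P2 * wb ⟨0, hK⟩ < p ⟨0, hK⟩ * W2 := by
        rw [eW, eP]; nlinarith [hkey]
      exact this.ne'
    have tp := two_point_strict N₀ hN (wb ⟨0, hK⟩) W2 (p ⟨0, hK⟩) P2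
      (hwb _) hW2pos (hp _).le hP2nn hne
    rw [hW2, hP2tot] at tp
    have hsf := Finset.add_sum_erase S1
      (fun k => wb k * Real.logb 2 (1 + p k / (N₀ * wb k))) mem0
    show (∑ k ∈ S1, wb k * Real.logb 2 (1 + p k / (N₀ * wb k))) +
        (wtot - ∑ k ∈ S1, wb k) *
          Real.logb 2 (1 + Pr / (N₀ * (wtot - ∑ k ∈ S1, wb k)))
      < wtot * Real.logb 2 (1 + (∑ k, p k) / (N₀ * wtot))
    linarith [h2, tp, hsf]
  refine ⟨main, ⟨?_, ?_⟩, ?_, ?_⟩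
  · intro heq
    by_contra hne
    exact absurd heq (ne_of_lt (strict (Nat.pos_of_ne_zero hne)))
  · intro h0
    show (∑ k ∈ S1, wb k * Real.logb 2 (1 + p k / (N₀ * wb k))) +
        (wtot - ∑ k ∈ S1, wb k) *
          Real.logb 2 (1 + Pr / (N₀ * (wtot - ∑ k ∈ S1, wb k)))
      = wtot * Real.logb 2 (1 + (∑ k, p k) / (N₀ * wtot))
    have hempty : S1 = ∅ := by rw [hS1def]; ext x; simp [h0]
    have huniv : Pr = ∑ k, p k := by
      rw [hPrdef, h0]
      simp
    rw [hempty, huniv]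
    simp
  · intro h0
    by_contra hlt
    push_neg at hlt
    have := (hchar ⟨0, hK⟩).1 (by rw [e0]; exact hlt)
    omega
  · intro hle
    by_contra h1
    have h1' : 0 < K₁ := Nat.pos_of_ne_zero h1
    have := (hchar ⟨0, hK⟩).2 h1'
    rw [e0] at this
    linarith
end

section
/- Let K₁ and K₂ be defined so that ŵ_k > w̄_k for k ≤ K₁, ŵ_k = w̄_k for K₁ < k ≤ K₂, and ŵ_k < w̄_k for k > K₂. Then K₁ ≤ K₂, and the optimal allocation admits the equivalent representation: w*_k = w̄_k for k ≤ K₂ and w*_k = (w_tot − ∑_{k'≤K₂} w̄_{k'})·p_k/(∑_{k'>K₂} p_{k'}) for k > K₂; i.e., critically-sized users receive exactly their bandwidth upper limits under the proportional-share allocation among non-oversized users. -/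
private lemma fdma_filter_lt_succ (K m : ℕ) (hm : m < K) :
    Finset.univ.filter (fun k' : Fin K => (k' : ℕ) < m + 1)
      = insert ⟨m, hm⟩ (Finset.univ.filter (fun k' : Fin K => (k' : ℕ) < m)) := by
  ext k
  simp [Fin.ext_iff]
  omega

private lemma fdma_filter_ge_eq (K m : ℕ) (hm : m < K) :
    Finset.univ.filter (fun k' : Fin K => m ≤ (k' : ℕ))
      = insert ⟨m, hm⟩ (Finset.univ.filter (fun k' : Fin K => m + 1 ≤ (k' : ℕ))) := by
  ext k
  simp [Fin.ext_iff]
  omega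

/-- With `K₁` oversized users (`ŵ_k > w̄_k`), critically-sized users `K₁ < k ≤ K₂`
(`ŵ_k = w̄_k`) and undersized users `k > K₂` (`ŵ_k < w̄_k`), we have `K₁ ≤ K₂`, and the
optimal allocation admits the equivalent representation in which all non-undersized users
receive their upper limits and the rest share the remaining bandwidth proportionally. -/
theorem stmt_7 (K : ℕ) (p wb : Fin K → ℝ) (hp : ∀ k, 0 < p k) (hwb : ∀ k, 0 < wb k)
    (wtot : ℝ) (hwtot : 0 < wtot)
    (hord : ∀ i j : Fin K, i ≤ j → p j / wb j ≤ p i / wb i)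
    (K₁ K₂ : ℕ) (hK₁ : K₁ ≤ K) (hK₂ : K₂ ≤ K)
    (hover : ∀ k : Fin K, (k : ℕ) < K₁ → dueShare K p wb wtot k > wb k)
    (hcrit : ∀ k : Fin K, K₁ ≤ (k : ℕ) → (k : ℕ) < K₂ → dueShare K p wb wtot k = wb k)
    (hunder : ∀ k : Fin K, K₂ ≤ (k : ℕ) → dueShare K p wb wtot k < wb k) :
    K₁ ≤ K₂ ∧ ∀ k : Fin K, wopt K p wb wtot K₁ k = wopt K p wb wtot K₂ k := by
  classical
  set S : ℕ → ℝ := fun m => ∑ k' ∈ Finset.univ.filter (fun k' : Fin K => (k' : ℕ) < m), wb k'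
    with hSdef
  set P : ℕ → ℝ := fun m => ∑ k' ∈ Finset.univ.filter (fun k' : Fin K => m ≤ (k' : ℕ)), p k'
    with hPdef
  have hdue : ∀ k : Fin K, dueShare K p wb wtot k = (wtot - S (k : ℕ)) * p k / P (k : ℕ) :=
    fun k => rfl
  have hSsucc : ∀ m (hm : m < K), S (m + 1) = S m + wb ⟨m, hm⟩ := by
    intro m hm
    simp only [hSdef, fdma_filter_lt_succ K m hm]
    rw [Finset.sum_insert (by simp)]
    ring
  have hPstep : ∀ m (hm : m < K), P m = p ⟨m, hm⟩ + P (m + 1) := by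
    intro m hm
    simp only [hPdef, fdma_filter_ge_eq K m hm]
    rw [Finset.sum_insert (by simp)]
  have hPpos : ∀ (m : ℕ) (k : Fin K), m ≤ (k : ℕ) → 0 < P m := by
    intro m k hk
    apply Finset.sum_pos (fun i _ => hp i)
    exact ⟨k, by simp [hk]⟩
  -- First part: K₁ ≤ K₂
  have hK12 : K₁ ≤ K₂ := by
    by_contra h
    push_neg at h
    set k : Fin K := ⟨K₂, lt_of_lt_of_le h hK₁⟩
    exact absurd (hover k h) (not_lt.mpr (le_of_lt (hunder k (le_refl K₂))))
  refine ⟨hK12, ?_⟩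
  -- cross-multiplication step
  have step : ∀ m, K₁ ≤ m → m < K₂ →
      (wtot - S (m + 1)) * P m = (wtot - S m) * P (m + 1) := by
    intro m hm1 hm2
    have hmK : m < K := lt_of_lt_of_le hm2 hK₂
    set km : Fin K := ⟨m, hmK⟩
    have hc : (wtot - S m) * p km / P m = wb km := by
      have := hcrit km (by simpa using hm1) (by simpa using hm2)
      rwa [hdue] at this
    have hPm : 0 < P m := hPpos m km (le_refl m)
    have hwbkm : wb km = (wtot - S m) * p km / P m := hc.symm
    rw [hSsucc m hmK]
    have hPst := hPstep m hmK
    rw [hwbkm]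
    field_simp
    linear_combination (wtot - S m) * hPst
  -- inductive claim
  have main : ∀ m, K₁ ≤ m → m ≤ K₂ → (wtot - S m) * P K₁ = (wtot - S K₁) * P m := by
    intro m
    induction m with
    | zero => intro h1 h2; interval_cases K₁; rfl
    | succ n ih =>
      intro h1 h2
      rcases Nat.lt_or_ge n K₁ with h | h
      · have : K₁ = n + 1 := by omega
        rw [this]
      · have hnK2 : n < K₂ := by omega
        have ihn := ih h (le_of_lt hnK2)
        have st := step n h hnK2
        have hnK : n < K := lt_of_lt_of_le hnK2 hK₂
        have hPn : 0 < P n := hPpos n ⟨n, hnK⟩ (le_refl n)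
        have := mul_left_cancel₀ (ne_of_gt hPn)
          (a := P n) (b := (wtot - S (n+1)) * P K₁) (c := (wtot - S K₁) * P (n+1))
        apply this
        linear_combination P K₁ * st + P (n + 1) * ihn
  intro k
  rcases Nat.lt_or_ge (k : ℕ) K₁ with hk1 | hk1
  · have hk2 : (k : ℕ) < K₂ := lt_of_lt_of_le hk1 hK12
    simp [wopt, hk1, hk2]
  · have hPK1 : 0 < P K₁ := hPpos K₁ k hk1
    rcases Nat.lt_or_ge (k : ℕ) K₂ with hk2 | hk2
    · -- critically sized: wopt K₁ k = wb k = wopt K₂ k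
      have hPk : 0 < P (k : ℕ) := hPpos (k : ℕ) k (le_refl _)
      have hm := main (k : ℕ) hk1 (le_of_lt hk2)
      have hc : (wtot - S (k : ℕ)) * p k / P (k : ℕ) = wb k := by
        have := hcrit k hk1 hk2
        rwa [hdue] at this
      have : (wtot - S K₁) * p k / P K₁ = wb k := by
        rw [← hc]
        field_simp
        linear_combination (-(p k)) * hm
      simp only [wopt, if_neg (not_lt.mpr hk1), if_pos hk2]
      exact this
    · -- undersized
      have hPK2 : 0 < P K₂ := hPpos K₂ k hk2
      have hm := main K₂ hK12 (le_refl K₂)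
      simp only [wopt, if_neg (not_lt.mpr hk1), if_neg (not_lt.mpr hk2)]
      show (wtot - S K₁) * p k / P K₁ = (wtot - S K₂) * p k / P K₂
      field_simp
      linear_combination (-(p k)) * hm
end

section
/- If there exists at least one oversized user (K₁ ≥ 1) and at least one non-oversized user (K₁ < K), then each non-oversized user receives strictly more than its proportional due share: w*_k > w_tot·p_k/(∑_{k'} p_{k'}) for all k > K₁. If K₁ = 0, each user receives exactly its proportional due share. -/
/-- If there is at least one oversized user and at least one non-oversized user, every
non-oversized user receives strictly more than its proportional due share
`w_tot·p_k/∑p`; if there is no oversized user, every user receives exactly its due share. -/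
theorem stmt_8 (K : ℕ) (p wb : Fin K → ℝ) (hp : ∀ k, 0 < p k) (hwb : ∀ k, 0 < wb k)
    (wtot : ℝ) (hwtot : 0 < wtot)
    (hord : ∀ i j : Fin K, i ≤ j → p j / wb j ≤ p i / wb i)
    (K₁ : ℕ) (hK₁ : K₁ ≤ K)
    (hchar : ∀ k : Fin K, (dueShare K p wb wtot k > wb k ↔ (k : ℕ) < K₁)) :
    (1 ≤ K₁ → K₁ < K → ∀ k : Fin K, K₁ ≤ (k : ℕ) →
      wtot * p k / (∑ k', p k') < wopt K p wb wtot K₁ k) ∧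
    (K₁ = 0 → ∀ k : Fin K, wopt K p wb wtot K₁ k = wtot * p k / (∑ k', p k')) := by
  set S : ℝ := ∑ k', p k' with hSdef
  set B : ℕ → ℝ := fun m => ∑ k' ∈ Finset.univ.filter (fun k' : Fin K => (k' : ℕ) < m), wb k' with hBdef
  set Q : ℕ → ℝ := fun m => ∑ k' ∈ Finset.univ.filter (fun k' : Fin K => m ≤ (k' : ℕ)), p k' with hQdef
  have hB0 : B 0 = 0 := by simp [hBdef]
  have hQ0 : Q 0 = S := by simp [hQdef, hSdef]
  have hBsucc : ∀ m (hm : m < K), B (m + 1) = wb ⟨m, hm⟩ + B m := by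
    intro m hm
    have hset : (Finset.univ.filter (fun k' : Fin K => (k' : ℕ) < m + 1))
        = insert ⟨m, hm⟩ (Finset.univ.filter (fun k' : Fin K => (k' : ℕ) < m)) := by
      ext x; simp [Fin.ext_iff]; omega
    simp only [hBdef, hset]
    rw [Finset.sum_insert (by simp)]
  have hQsucc : ∀ m (hm : m < K), Q m = p ⟨m, hm⟩ + Q (m + 1) := by
    intro m hm
    have hset : (Finset.univ.filter (fun k' : Fin K => m ≤ (k' : ℕ)))
        = insert ⟨m, hm⟩ (Finset.univ.filter (fun k' : Fin K => m + 1 ≤ (k' : ℕ))) := by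
      ext x; simp [Fin.ext_iff]; omega
    simp only [hQdef, hset]
    rw [Finset.sum_insert (by simp)]
  have hQpos : ∀ m, m < K → 0 < Q m := by
    intro m hm
    apply Finset.sum_pos (fun i _ => hp i)
    exact ⟨⟨m, hm⟩, by simp⟩
  constructor
  · intro h1 hKK k hk
    have hSpos : 0 < S := by
      apply Finset.sum_pos (fun i _ => hp i); exact ⟨k, Finset.mem_univ k⟩
    -- key induction
    have key : ∀ m, m ≤ K₁ → (wtot * Q m ≤ S * (wtot - B m)) ∧
        (1 ≤ m → wtot * Q m < S * (wtot - B m)) := by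
      intro m
      induction m with
      | zero => intro _; refine ⟨by rw [hB0, hQ0]; ring_nf; exact le_refl _, by omega⟩
      | succ n ih =>
        intro hn
        have hnK₁ : n < K₁ := by omega
        have hnK : n < K := lt_of_lt_of_le hnK₁ hK₁
        have ihh := (ih (le_of_lt hnK₁)).1
        have hQn : 0 < Q n := hQpos n hnK
        have hQn1 : 0 < Q (n + 1) := hQpos (n + 1) (by omega)
        -- from hchar at index n
        have hd : wb ⟨n, hnK⟩ < dueShare K p wb wtot ⟨n, hnK⟩ := (hchar ⟨n, hnK⟩).mpr hnK₁
        have hdue : dueShare K p wb wtot ⟨n, hnK⟩ = (wtot - B n) * p ⟨n, hnK⟩ / Q n := by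
          simp only [dueShare, hBdef, hQdef, Fin.lt_def, Fin.le_def]
        rw [hdue] at hd
        have hkey : wb ⟨n, hnK⟩ * Q n < (wtot - B n) * p ⟨n, hnK⟩ :=
          (lt_div_iff₀ hQn).mp hd
        have hwbpos := hwb ⟨n, hnK⟩
        have hppos := hp ⟨n, hnK⟩
        have hBn' : B (n + 1) = wb ⟨n, hnK⟩ + B n := hBsucc n hnK
        have hQn' : Q n = p ⟨n, hnK⟩ + Q (n + 1) := hQsucc n hnK
        have hWB : 0 < wtot - B n := by nlinarith
        have strict : wtot * Q (n + 1) < S * (wtot - B (n + 1)) := by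
          have h1' : wtot * Q (n + 1) * Q n ≤ S * (wtot - B n) * Q (n + 1) := by
            nlinarith [mul_le_mul_of_nonneg_right ihh hQn1.le]
          have h2' : S * (wtot - B n) * Q (n + 1) < S * (wtot - B (n + 1)) * Q n := by
            rw [hBn', hQn']
            have hkey' := hQn' ▸ hkey
            nlinarith [mul_lt_mul_of_pos_left hkey' hSpos]
          have := lt_of_le_of_lt h1' h2'
          exact lt_of_mul_lt_mul_right this hQn.le
        exact ⟨strict.le, fun _ => strict⟩
    have hmain := (key K₁ le_rfl).2 h1
    have hQK₁ : 0 < Q K₁ := hQpos K₁ hKK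
    have hwo : wopt K p wb wtot K₁ k = (wtot - B K₁) * p k / Q K₁ := by
      simp only [wopt, hBdef, hQdef, if_neg (by omega : ¬ (k : ℕ) < K₁)]
    rw [hwo]
    rw [div_lt_div_iff₀ hSpos hQK₁]
    have hpk := hp k
    nlinarith [mul_lt_mul_of_pos_right hmain hpk]
  · intro hK0 k
    subst hK0
    have hwo : wopt K p wb wtot 0 k = (wtot - B 0) * p k / Q 0 := by
      simp only [wopt, hBdef, hQdef, if_neg (by omega : ¬ (k : ℕ) < 0)]
    rw [hwo, hB0, hQ0]
    ring_nf
end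

section
/- Assume users are ordered so that p_k/n̄_k is non-increasing and define n̂_k = (N − ∑_{k'<k} n̄_{k'})·p_k/(∑_{k'≥k} p_{k'}). The maximum sum rate of the multi-code CDMA system with no oversized user (n̂_k ≤ n̄_k for all k) equals the MAC sum capacity (1/2)·log(1 + (∑_k p_k)/σ²) per chip; moreover, N·p₁/(∑_k p_k) ≤ n̄₁ is necessary and sufficient for this equality. -/
/-!
Writing the rate as `(1/(2 log 2)) ∑ᵢ (nᵢ/N) log(1 + N Pᵢ/(σ² nᵢ))` over the groups of
dimensions (each capped user on its `n̄_k` codes, the remaining users together on the rest),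
strict concavity of `log` bounds it by `(1/2) log₂(1 + ∑ p/σ²)`, with equality only if every
group has the same SNR `∑ p/σ²`. An oversized first user (`n̄₁ < N p₁/∑ p = n̂₁`) has a different
SNR, so the rate falls short; otherwise `K₁ = 0` and the formula is the MAC capacity itself.
The capped users leave a positive number of dimensions to the rest, since an oversized user has
`n̄_k < n̂_k ≤ N - ∑_{j<k} n̄_j`.
-/

/-- Due number of multi-codes `n̂_k` of user `k`: remaining dimensions after earlier users
take their upper limits, shared proportionally to power among users `k, …, K`. -/
noncomputable def nhat (K N : ℕ) (p : Fin K → ℝ) (nb : Fin K → ℕ) (k : Fin K) : ℝ :=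
  ((N : ℝ) - ∑ k' ∈ Finset.univ.filter (fun k' : Fin K => k' < k), (nb k' : ℝ)) * p k /
    (∑ k' ∈ Finset.univ.filter (fun k' : Fin K => k ≤ k'), p k')

open Finset Real

theorem sum_mul_log_one_add_div_lt_s12 {ι : Type*} {t : Finset ι} {n P : ι → ℝ}
    (hn : ∀ i ∈ t, 0 < n i) (hP : ∀ i ∈ t, 0 ≤ P i)
    (hne : ∃ i ∈ t, P i / n i ≠ (∑ j ∈ t, P j) / ∑ j ∈ t, n j) :
    ∑ i ∈ t, n i * log (1 + P i / n i) <
      (∑ i ∈ t, n i) * log (1 + (∑ i ∈ t, P i) / ∑ i ∈ t, n i) := by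
  obtain ⟨i₀, hi₀, hi₀ne⟩ := hne
  set W := ∑ i ∈ t, n i
  have hW : 0 < W := sum_pos hn ⟨i₀, hi₀⟩
  have hmean : ∑ i ∈ t, (n i / W) • (1 + P i / n i) = 1 + (∑ i ∈ t, P i) / W := by
    have h (i) (hi : i ∈ t) : (n i / W) • (1 + P i / n i) = n i / W + P i / W := by
      rw [smul_eq_mul]; field_simp [(hn i hi).ne']
    rw [sum_congr rfl h, sum_add_distrib, ← sum_div, ← sum_div, div_self hW.ne']
  have hJensen := (strictConcaveOn_log_Ioi.lt_map_sum_iff_of_pos' (t := t)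
    (w := fun i => n i / W) (p := fun i => 1 + P i / n i) (fun i hi => div_pos (hn i hi) hW)
    (by rw [← sum_div, div_self hW.ne'])
    (fun i hi => add_pos_of_pos_of_nonneg one_pos (div_nonneg (hP i hi) (hn i hi).le))).2
    ⟨i₀, hi₀, by simpa only [hmean, ne_eq, add_right_inj] using hi₀ne⟩
  rw [hmean] at hJensen
  calc ∑ i ∈ t, n i * log (1 + P i / n i)
      = W * ∑ i ∈ t, (n i / W) • log (1 + P i / n i) := by
        rw [mul_sum]; refine sum_congr rfl fun i _ => ?_
        rw [smul_eq_mul]; field_simp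
    _ < W * log (1 + (∑ i ∈ t, P i) / W) := mul_lt_mul_of_pos_left hJensen hW

section nhat

variable {K N : ℕ} {p : Fin K → ℝ} {nb : Fin K → ℕ}

theorem nhat_zero (hK : 0 < K) : nhat K N p nb ⟨0, hK⟩ = N * p ⟨0, hK⟩ / ∑ k, p k := by
  have hlt : univ.filter (fun k : Fin K => k < ⟨0, hK⟩) = ∅ := by
    ext k; simp [Fin.lt_def]
  have hle : univ.filter (fun k : Fin K => ⟨0, hK⟩ ≤ k) = univ := by
    ext k; simp [Fin.le_def]
  simp only [nhat, hlt, hle, sum_empty, sub_zero]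

theorem nhat_le_max (hp : ∀ k, 0 ≤ p k) (k : Fin K) :
    nhat K N p nb k ≤ max ((N : ℝ) - ∑ j ∈ Iio k, (nb j : ℝ)) 0 := by
  have hfrac₀ : 0 ≤ p k / ∑ j ∈ Ici k, p j := div_nonneg (hp k) (sum_nonneg fun j _ => hp j)
  have hfrac₁ : p k / ∑ j ∈ Ici k, p j ≤ 1 :=
    div_le_one_of_le₀ (single_le_sum (fun j _ => hp j) (mem_Ici.2 le_rfl))
      (sum_nonneg fun j _ => hp j)
  rw [nhat, filter_gt_eq_Iio, filter_le_eq_Ici, mul_div_assoc]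
  rcases le_total 0 ((N : ℝ) - ∑ j ∈ Iio k, (nb j : ℝ)) with hR | hR
  · exact (mul_le_of_le_one_right hR hfrac₁).trans (le_max_left _ _)
  · exact (mul_nonpos_of_nonpos_of_nonneg hR hfrac₀).trans (le_max_right _ _)

theorem sum_Iic_lt_of_lt_nhat (hp : ∀ k, 0 ≤ p k) {k : Fin K}
    (hk : (nb k : ℝ) < nhat K N p nb k) : ∑ j ∈ Iic k, (nb j : ℝ) < N := by
  have hR := (lt_max_iff.1 (hk.trans_le (nhat_le_max hp k))).resolve_right
    (Nat.cast_nonneg (nb k)).not_gt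
  rw [← Iio_insert, sum_insert notMem_Iio_self]
  linarith

end nhat

/-- Users in `A` transmit on their `n̄_k` codes; the others share the remaining dimensions. -/
noncomputable def multicodeSumRate {ι : Type*} [Fintype ι] [DecidableEq ι] (N : ℕ) (s : ℝ)
    (p : ι → ℝ) (nb : ι → ℕ) (A : Finset ι) : ℝ :=
  (∑ k ∈ A, ((nb k : ℝ) / (2 * N)) * logb 2 (1 + N * p k / (s * nb k))) +
    ((N - ∑ k ∈ A, (nb k : ℝ)) / (2 * N)) *
      logb 2 (1 + N * (∑ k ∈ Aᶜ, p k) / (s * (N - ∑ k ∈ A, (nb k : ℝ))))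

section multicodeSumRate

variable {ι : Type*} [Fintype ι] [DecidableEq ι] {N : ℕ} {s : ℝ} {p : ι → ℝ} {nb : ι → ℕ}

theorem multicodeSumRate_empty (hN : N ≠ 0) :
    multicodeSumRate N s p nb ∅ = 1 / 2 * logb 2 (1 + (∑ k, p k) / s) := by
  have hN' : (N : ℝ) ≠ 0 := Nat.cast_ne_zero.2 hN
  simp only [multicodeSumRate, sum_empty, compl_empty, sub_zero, zero_add,
    div_mul_cancel_right₀ hN']
  rw [show (N : ℝ) * (∑ k, p k) / (s * N) = (∑ k, p k) / s by field_simp, one_div]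

theorem multicodeSumRate_lt {A : Finset ι} (hN : 0 < N) (hs : 0 < s) (hp : ∀ k, 0 ≤ p k)
    (hnb : ∀ k ∈ A, 0 < nb k) (hA : ∑ k ∈ A, (nb k : ℝ) < N)
    (hk : ∃ k ∈ A, (nb k : ℝ) * ∑ j, p j ≠ N * p k) :
    multicodeSumRate N s p nb A < 1 / 2 * logb 2 (1 + (∑ k, p k) / s) := by
  have hN' : (0 : ℝ) < N := Nat.cast_pos.2 hN
  let n : Option ι → ℝ := fun i => i.elim (N - ∑ k ∈ A, (nb k : ℝ)) (fun k => nb k)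
  let P : Option ι → ℝ := fun i => i.elim (N * (∑ k ∈ Aᶜ, p k) / s) (fun k => N * p k / s)
  have hn_sum : ∑ i ∈ insertNone A, n i = N := by simp [n, sum_insertNone]
  have hP_sum : ∑ i ∈ insertNone A, P i = N * (∑ k, p k) / s := by
    simp only [P, sum_insertNone, Option.elim, ← sum_div, ← mul_sum, ← sum_add_sum_compl A p]
    ring
  have hrate : multicodeSumRate N s p nb A =
      (∑ i ∈ insertNone A, n i * log (1 + P i / n i)) / (2 * N * log 2) := by
    simp only [multicodeSumRate, n, P, sum_insertNone, Option.elim, logb, div_div, add_div,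
      sum_div]
    rw [add_comm]
    congr 1
    · ring
    · exact sum_congr rfl fun k _ => by ring
  have hJensen := sum_mul_log_one_add_div_lt_s12 (t := insertNone A) (n := n) (P := P) ?_ ?_ ?_
  · rw [hn_sum, hP_sum, show (N : ℝ) * (∑ k, p k) / s / N = (∑ k, p k) / s by field_simp]
      at hJensen
    rw [hrate, logb]
    calc _ < N * log (1 + (∑ k, p k) / s) / (2 * N * log 2) := by gcongr
      _ = _ := by field_simp
  · rintro (_ | k) hi
    · exact sub_pos.2 hA
    · exact Nat.cast_pos.2 (hnb k (some_mem_insertNone.1 hi))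
  · rintro (_ | k) _
    · exact div_nonneg (mul_nonneg hN'.le (sum_nonneg fun k _ => hp k)) hs.le
    · exact div_nonneg (mul_nonneg hN'.le (hp k)) hs.le
  · obtain ⟨k, hkA, hk⟩ := hk
    refine ⟨some k, some_mem_insertNone.2 hkA, ?_⟩
    rw [hn_sum, hP_sum]
    intro h
    have hnbk : (0 : ℝ) < nb k := Nat.cast_pos.2 (hnb k hkA)
    simp only [P, n, Option.elim] at h
    field_simp at h
    exact hk (by linarith)

end multicodeSumRate

theorem stmt_12_general (K N : ℕ) (hK : 0 < K) (hN : 0 < N) (p : Fin K → ℝ) (hp : ∀ k, 0 < p k)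
    (nb : Fin K → ℕ) (hnb : ∀ k, 0 < nb k) (s : ℝ) (hs : 0 < s)
    (K₁ : ℕ) (hK₁ : K₁ ≤ K)
    (hchar : ∀ k : Fin K, (nhat K N p nb k > (nb k : ℝ) ↔ (k : ℕ) < K₁)) :
    let C : ℝ :=
      (∑ k ∈ Finset.univ.filter (fun k : Fin K => (k : ℕ) < K₁),
        ((nb k : ℝ) / (2 * N)) * Real.logb 2 (1 + N * p k / (s * (nb k : ℝ)))) +
      (((N : ℝ) - ∑ k ∈ Finset.univ.filter (fun k : Fin K => (k : ℕ) < K₁), (nb k : ℝ)) /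
          (2 * N)) *
        Real.logb 2 (1 +
          N * (∑ k ∈ Finset.univ.filter (fun k : Fin K => K₁ ≤ (k : ℕ)), p k) /
          (s * ((N : ℝ) -
            ∑ k ∈ Finset.univ.filter (fun k : Fin K => (k : ℕ) < K₁), (nb k : ℝ))))
    ((∀ k : Fin K, nhat K N p nb k ≤ (nb k : ℝ)) →
      C = (1 / 2) * Real.logb 2 (1 + (∑ k, p k) / s)) ∧
    (C = (1 / 2) * Real.logb 2 (1 + (∑ k, p k) / s) ↔
      (N : ℝ) * p ⟨0, hK⟩ / (∑ k, p k) ≤ (nb ⟨0, hK⟩ : ℝ)) := by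
  intro C
  set k₀ : Fin K := ⟨0, hK⟩
  have hnhat₀ : nhat K N p nb k₀ = N * p k₀ / ∑ k, p k := nhat_zero hK
  have hC : C = multicodeSumRate N s p nb (univ.filter fun k : Fin K => (k : ℕ) < K₁) := by
    simp only [C, multicodeSumRate, compl_filter, not_lt]
  have h_eq : N * p k₀ / ∑ k, p k ≤ nb k₀ → C = 1 / 2 * logb 2 (1 + (∑ k, p k) / s) := by
    intro h
    obtain rfl : K₁ = 0 := by
      by_contra hK₁0
      exact (hnhat₀ ▸ h).not_gt ((hchar k₀).2 (Nat.pos_of_ne_zero hK₁0))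
    simpa [hC] using multicodeSumRate_empty (s := s) (p := p) (nb := nb) hN.ne'
  have h_lt : nb k₀ < N * p k₀ / ∑ k, p k → C < 1 / 2 * logb 2 (1 + (∑ k, p k) / s) := by
    intro h
    have hK₁pos : 0 < K₁ := (hchar k₀).1 (hnhat₀ ▸ h)
    set k₁ : Fin K := ⟨K₁ - 1, by omega⟩
    have hA : univ.filter (fun k : Fin K => (k : ℕ) < K₁) = Iic k₁ := by
      ext k
      simp only [mem_filter, mem_univ, true_and, mem_Iic, Fin.le_def, k₁]
      omega
    rw [hC, hA]
    refine multicodeSumRate_lt hN hs (fun k => (hp k).le) (fun k _ => hnb k)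
      (sum_Iic_lt_of_lt_nhat (fun k => (hp k).le) ((hchar k₁).2 (by simp only [k₁]; omega)))
      ⟨k₀, by simp [k₀, k₁, Fin.le_def], fun h' => ?_⟩
    rw [lt_div_iff₀ (sum_pos (fun k _ => hp k) ⟨k₀, mem_univ _⟩)] at h
    linarith
  exact ⟨fun hall => h_eq (hnhat₀ ▸ hall k₀), fun hC => not_lt.1 fun h => (h_lt h).ne hC, h_eq⟩

/-- If no user is oversized (`n̂_k ≤ n̄_k` for all `k`), the maximum multi-code CDMA sum rate
equals the MAC sum capacity `(1/2)·log₂(1 + ∑p/σ²)` per chip; moreover this equality holds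
iff `N·p₁/∑p ≤ n̄₁`. -/
theorem stmt_12 (K N : ℕ) (hK : 0 < K) (hN : 0 < N) (p : Fin K → ℝ) (hp : ∀ k, 0 < p k)
    (nb : Fin K → ℕ) (hnb : ∀ k, 0 < nb k) (s : ℝ) (hs : 0 < s)
    (hord : ∀ i j : Fin K, i ≤ j → p j / (nb j : ℝ) ≤ p i / (nb i : ℝ))
    (K₁ : ℕ) (hK₁ : K₁ ≤ K)
    (hchar : ∀ k : Fin K, (nhat K N p nb k > (nb k : ℝ) ↔ (k : ℕ) < K₁)) :
    let C : ℝ :=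
      (∑ k ∈ Finset.univ.filter (fun k : Fin K => (k : ℕ) < K₁),
        ((nb k : ℝ) / (2 * N)) * Real.logb 2 (1 + N * p k / (s * (nb k : ℝ)))) +
      (((N : ℝ) - ∑ k ∈ Finset.univ.filter (fun k : Fin K => (k : ℕ) < K₁), (nb k : ℝ)) /
          (2 * N)) *
        Real.logb 2 (1 +
          N * (∑ k ∈ Finset.univ.filter (fun k : Fin K => K₁ ≤ (k : ℕ)), p k) /
          (s * ((N : ℝ) -
            ∑ k ∈ Finset.univ.filter (fun k : Fin K => (k : ℕ) < K₁), (nb k : ℝ))))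
    ((∀ k : Fin K, nhat K N p nb k ≤ (nb k : ℝ)) →
      C = (1 / 2) * Real.logb 2 (1 + (∑ k, p k) / s)) ∧
    (C = (1 / 2) * Real.logb 2 (1 + (∑ k, p k) / s) ↔
      (N : ℝ) * p ⟨0, hK⟩ / (∑ k, p k) ≤ (nb ⟨0, hK⟩ : ℝ)) :=
  stmt_12_general K N hK hN p hp nb hnb s hs K₁ hK₁ hchar
end

section
/- Given N ∈ ℕ and powers p₁,…,p_K > 0, setting n̄_k = ⌈N·p_k/(∑_{k'} p_{k'})⌉ for each k ensures p_k/n̄_k ≤ (∑_{k'} p_{k'})/N for all k, and hence no user is oversized (so the multi-code CDMA system achieves the MAC sum capacity). Moreover ∑_k n̄_k ≤ N + (K − 1). -/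
/-- Setting `n̄_k = ⌈N·p_k/∑p⌉` ensures `p_k/n̄_k ≤ (∑p)/N` for every `k` (so no user is
oversized and the multi-code CDMA system achieves the MAC sum capacity), while
`∑ n̄_k ≤ N + (K − 1)`. -/
theorem stmt_13 (K N : ℕ) (hK : 0 < K) (hN : 0 < N) (p : Fin K → ℝ) (hp : ∀ k, 0 < p k) :
    let nb : Fin K → ℕ := fun k => ⌈(N : ℝ) * p k / (∑ k', p k')⌉₊
    (∀ k, p k / (nb k : ℝ) ≤ (∑ k', p k') / N) ∧ (∑ k, nb k) ≤ N + (K - 1) := by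
  intro nb
  have hS : 0 < ∑ k', p k' := Finset.sum_pos (fun k _ => hp k) ⟨⟨0, hK⟩, Finset.mem_univ _⟩
  have hNR : (0:ℝ) < N := by exact_mod_cast hN
  have hx : ∀ k, 0 < (N : ℝ) * p k / (∑ k', p k') := fun k =>
    div_pos (mul_pos hNR (hp k)) hS
  have hnb : ∀ k, 0 < nb k := fun k => Nat.ceil_pos.mpr (hx k)
  constructor
  · intro k
    have hle : (N : ℝ) * p k / (∑ k', p k') ≤ (nb k : ℝ) := Nat.le_ceil _
    have hnbR : (0:ℝ) < (nb k : ℝ) := by exact_mod_cast hnb k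
    rw [div_le_div_iff₀ hnbR hNR]
    have := (div_le_iff₀ hS).mp hle
    linarith
  · have hlt : ((∑ k, nb k : ℕ) : ℝ) < (N : ℝ) + K := by
      push_cast
      calc (∑ k, (nb k : ℝ)) < ∑ k, ((N : ℝ) * p k / (∑ k', p k') + 1) := by
            apply Finset.sum_lt_sum_of_nonempty ⟨⟨0, hK⟩, Finset.mem_univ _⟩
            intro k _
            exact Nat.ceil_lt_add_one (le_of_lt (hx k))
        _ = (N : ℝ) + K := by
            rw [Finset.sum_add_distrib, ← Finset.sum_div, ← Finset.mul_sum,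
              mul_div_assoc, div_self (ne_of_gt hS)]
            simp
    have : (∑ k, nb k) < N + K := by exact_mod_cast hlt
    omega
end
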